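/- arXiv:1008.0460 — 8 statements merged into one kernel-verified Lean document; each statement's English description precedes it below -/
import Mathlib

section
/- Suppose p : ℕ → ℤ satisfies the concavity condition p(k) + p(l) ≤ 2·p(i) whenever k < i < l and m_j = 0 for all k < j < l (where m : ℕ → ℕ is a finitely supported multiplicity function), p(0) = 0, p is eventually constant for i larger than all j with m_j > 0, and p(i) ≥ 0 for every i with m_i > 0. Then p(i) ≥ 0 for all i ∈ ℕ. -/
/-- Abstract positivity of vacancy numbers (Corollary 2.7 of the paper):
if `p : ℕ → ℤ` is concave on every gap of the multiplicity function `m`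
(`p k + p l ≤ 2 p i` whenever `k < i < l` and `m` vanishes on `(k,l)`),
`p 0 = 0`, `p` is eventually constant beyond the support of `m`, and
`p i ≥ 0` at every `i` with `m i > 0`, then `p i ≥ 0` everywhere. -/
theorem stmt3 (p : ℕ → ℤ) (m : ℕ →₀ ℕ)
    (hconcave : ∀ k i l : ℕ, k < i → i < l →
      (∀ j, k < j → j < l → m j = 0) → p k + p l ≤ 2 * p i)
    (h0 : p 0 = 0)
    (hconst : ∃ N : ℕ, (∀ j, N ≤ j → m j = 0) ∧ (∀ i j, N ≤ i → N ≤ j → p i = p j))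
    (hpos : ∀ i, m i ≠ 0 → 0 ≤ p i) :
    ∀ i, 0 ≤ p i := by
  intro i
  rcases Nat.eq_zero_or_pos i with hi0 | hi0
  · simp [hi0, h0]
  by_cases hmi : m i ≠ 0
  · exact hpos i hmi
  push_neg at hmi
  -- choose k : greatest j ≤ i-1 with (j = 0 ∨ m j ≠ 0)
  classical
  set P : ℕ → Prop := fun j => j = 0 ∨ m j ≠ 0 with hP
  have hP0 : P 0 := Or.inl rfl
  set k := Nat.findGreatest P (i - 1) with hk
  have hkspec : P k := Nat.findGreatest_spec (Nat.zero_le _) hP0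
  have hki : k < i := lt_of_le_of_lt (Nat.findGreatest_le _) (by omega)
  have hpk : 0 ≤ p k := by
    rcases hkspec with h | h
    · simp [h, h0]
    · exact hpos k h
  have hgap : ∀ j, k < j → j < i → m j = 0 := by
    intro j hkj hji
    by_contra hmj
    exact (Nat.findGreatest_is_greatest hkj (by omega) : ¬ P j) (Or.inr hmj)
  by_cases hex : ∃ l, i < l ∧ m l ≠ 0
  · set l := Nat.find hex with hl
    obtain ⟨hil, hml⟩ := Nat.find_spec hex
    have hgap2 : ∀ j, k < j → j < l → m j = 0 := by
      intro j hkj hjl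
      rcases lt_trichotomy j i with h | h | h
      · exact hgap j hkj h
      · subst h; exact hmi
      · by_contra hmj
        exact (Nat.find_min hex hjl) ⟨h, hmj⟩
    have := hconcave k i l hki hil hgap2
    have hpl := hpos l hml
    linarith
  · push_neg at hex
    obtain ⟨N, hN, hc⟩ := hconst
    set L := max N (i + 1) with hL
    have hiL : i < L := lt_of_lt_of_le (Nat.lt_succ_self i) (le_max_right _ _)
    have h1 : p k + p L ≤ 2 * p i := by
      apply hconcave k i L hki hiL
      intro j hkj hjL
      rcases lt_trichotomy j i with h | h | h
      · exact hgap j hkj h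
      · subst h; exact hmi
      · exact hex j h
    have h2 : p i + p (L + 1) ≤ 2 * p L := by
      apply hconcave i L (L + 1) hiL (Nat.lt_succ_self L)
      intro j hj _
      exact hex j hj
    have h3 : p (L + 1) = p L :=
      hc _ _ (le_trans (le_max_left _ _) (Nat.le_succ_of_le le_rfl)) (le_max_left _ _)
    rw [h3] at h2
    linarith
end

section
/- Let w be a Yamanouchi (lattice) word, and let w' be obtained from w by inserting one occurrence of each letter 1, ..., h so that the inserted letter i precedes all copies of i in w and the inserted letters occur in the order 1, 2, ..., h from left to right. Then w' is a lattice word. -/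
/-- Yamanouchi (lattice word) condition for words in positive integers:
every prefix contains at least as many `i`'s as `(i+1)`'s. -/
def IsYamanouchi (w : List ℕ) : Prop :=
  ∀ k i : ℕ, (w.take k).count (i + 2) ≤ (w.take k).count (i + 1)

/-- Key count lemma: any prefix of the word obtained by inserting the letters
`a+1, …, a+h` between the segments equals (in counts) a prefix of the original
word together with an initial run `a+1, …, a+t` of the inserted letters. -/
lemma stmt7_aux : ∀ (h a : ℕ) (vs : Fin (h+1) → List ℕ) (k : ℕ),
    ∃ k0 t, t ≤ h ∧ ∀ c : ℕ,
      (((List.ofFn fun i : Fin h => vs i.castSucc ++ [a + (i : ℕ) + 1]).flatten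
          ++ vs (Fin.last h)).take k).count c
        = (((List.ofFn vs).flatten).take k0).count c + (List.range' (a+1) t).count c := by
  intro h
  induction h with
  | zero =>
      intro a vs k
      refine ⟨k, 0, le_refl 0, fun c => ?_⟩
      simp [List.ofFn_succ]
  | succ h IH =>
      intro a vs k
      by_cases hk : k ≤ (vs 0).length
      · refine ⟨k, 0, Nat.zero_le _, fun c => ?_⟩
        rw [List.ofFn_succ (f := vs)]
        rw [List.ofFn_succ (f := fun i : Fin (h+1) => vs i.castSucc ++ [a + (i : ℕ) + 1])]
        simp only [List.flatten_cons, Fin.castSucc_zero, Fin.val_zero]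
        rw [List.append_assoc, List.append_assoc,
          List.take_append_of_le_length (by simpa using hk),
          List.take_append_of_le_length hk]
        simp
      · push_neg at hk
        obtain ⟨m, hm⟩ := Nat.exists_eq_add_of_lt hk
        obtain ⟨k0', t', ht', hcnt⟩ := IH (a+1) (fun i => vs i.succ) m
        refine ⟨(vs 0).length + k0', t' + 1, Nat.succ_le_succ ht', fun c => ?_⟩
        subst hm
        rw [List.ofFn_succ (f := vs)]
        rw [List.ofFn_succ (f := fun i : Fin (h+1) => vs i.castSucc ++ [a + (i : ℕ) + 1])]
        simp only [List.flatten_cons, Fin.castSucc_zero, Fin.val_zero]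
        have hfun : (fun i : Fin h => vs ((i : Fin h).succ).castSucc ++ [a + ((i.succ : Fin (h+1)) : ℕ) + 1])
            = (fun i : Fin h => (fun j : Fin (h+1) => vs j.succ) i.castSucc ++ [(a+1) + (i : ℕ) + 1]) := by
          funext i
          rw [← Fin.succ_castSucc]
          congr 1
          simp [Fin.val_succ]
          omega
        rw [List.append_assoc, List.append_assoc]
        have e1 : (vs 0).length + m + 1 = (vs 0).length + (1 + m) := by omega
        rw [e1, List.take_length_add_append, List.take_length_add_append]
        rw [show (1 + m) = ([a + 0 + 1] : List ℕ).length + m by simp]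
        rw [List.take_length_add_append]
        have hlast : vs (Fin.last (h+1)) = (fun j : Fin (h+1) => vs j.succ) (Fin.last h) := rfl
        rw [hfun, hlast] at *
        simp only [List.count_append, List.count_cons, List.range'_succ]
        beta_reduce at hcnt
        rw [hcnt c]
        simp [List.count_append, List.count_cons]
        omega

/-- In an initial run `1, …, t` there are at least as many `(i+1)`'s as `(i+2)`'s. -/
lemma stmt7_range'_count_le (t i : ℕ) :
    (List.range' 1 t).count (i + 2) ≤ (List.range' 1 t).count (i + 1) := by
  by_cases hmem : (i + 2) ∈ List.range' 1 t
  · have h1 : (i + 1) ∈ List.range' 1 t := by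
      rw [List.mem_range'_1] at hmem ⊢; omega
    calc (List.range' 1 t).count (i + 2) ≤ 1 :=
        List.nodup_iff_count_le_one.mp (List.nodup_range' (s := 1) (n := t)) _
      _ ≤ (List.range' 1 t).count (i + 1) := List.one_le_count_iff.mpr h1
  · rw [(List.count_eq_zero).mpr hmem]; exact Nat.zero_le _

/-- If `w = ws 0 ++ ws 1 ++ ⋯ ++ ws h` is a Yamanouchi word and `w'` is
obtained from `w` by inserting one occurrence of each letter `1, …, h`, the
letter `i+1` being inserted between the segments `ws i` and `ws (i+1)`
(so the inserted letters appear in increasing order from left to right), in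
such a way that the inserted letter `i+1` precedes every occurrence of `i+1`
already present in `w` (no segment `ws j` with `j ≤ i` contains the letter
`i+1`), then `w'` is again a Yamanouchi word. -/
theorem stmt7 (h : ℕ) (ws : Fin (h + 1) → List ℕ) (w w' : List ℕ)
    (hw : w = (List.ofFn ws).flatten)
    (hw' : w' = (List.ofFn fun i : Fin h => ws i.castSucc ++ [(i : ℕ) + 1]).flatten
        ++ ws (Fin.last h))
    (hins : ∀ i : Fin h, ∀ j : Fin (h + 1), (j : ℕ) ≤ (i : ℕ) → ((i : ℕ) + 1) ∉ ws j)
    (hyam : IsYamanouchi w) :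
    IsYamanouchi w' := by
  intro k i
  have hfun : (fun i : Fin h => ws i.castSucc ++ [(i : ℕ) + 1])
      = fun i : Fin h => ws i.castSucc ++ [0 + (i : ℕ) + 1] := by
    funext i; simp
  obtain ⟨k0, t, -, hcnt⟩ := stmt7_aux h 0 ws k
  rw [hw', hfun, hcnt (i + 2), hcnt (i + 1), ← hw]
  exact Nat.add_le_add (hyam k0 i) (stmt7_range'_count_le t i)
end

section
/- Suppose partitions ν^{(1)}, …, ν^{(n)} satisfy, for type C data: the vacancy conditions p_i^{(a)} = Q_i(ν^{(a-1)}) − 2Q_i(ν^{(a)}) + Q_i(ν^{(a+1)}) ≥ 0 for k+1 ≤ a ≤ n−1 and all i, p_i^{(n)} = Q_{2i}(ν^{(n-1)}) − Q_{2i}(ν^{(n)}) ≥ 0 for all i, |ν^{(a)}| = |ν^{(a+1)}| for k ≤ a ≤ n−1 (stability of box counts), and all parts of ν^{(n)} are even. Then the largest parts agree: ν^{(k+1)}_1 = ν^{(k+2)}_1 = ⋯ = ν^{(n)}_1. -/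
/-- `Qfun m i = Σ_k min(i,k)·m_k`, where `m` records part multiplicities. -/
def Qfun (m : ℕ →₀ ℕ) (i : ℕ) : ℤ := m.support.sum fun k => (min i k : ℤ) * m k

/-- Number of boxes `|μ|` of the partition with multiplicities `m`. -/
def msize (m : ℕ →₀ ℕ) : ℕ := m.support.sum fun k => k * m k

/-- The largest part `μ_1` of the partition with multiplicities `m`
(`0` if the partition is empty). -/
def maxPart (m : ℕ →₀ ℕ) : ℕ := m.support.sup id


lemma msize_cast (m : ℕ →₀ ℕ) : (msize m : ℤ) = m.support.sum fun k => (k : ℤ) * m k := by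
  simp [msize]

lemma Qfun_le_msize (m : ℕ →₀ ℕ) (i : ℕ) : Qfun m i ≤ (msize m : ℤ) := by
  rw [msize_cast, Qfun]
  apply Finset.sum_le_sum
  intro j _
  have h : (min i j : ℤ) ≤ j := by exact_mod_cast min_le_right i j
  exact mul_le_mul_of_nonneg_right h (by positivity)

lemma Qfun_eq_of_maxPart_le {m : ℕ →₀ ℕ} {i : ℕ} (h : maxPart m ≤ i) :
    Qfun m i = (msize m : ℤ) := by
  rw [msize_cast, Qfun]
  apply Finset.sum_congr rfl
  intro j hj
  have hji : (j : ℤ) ≤ i := by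
    exact_mod_cast le_trans (Finset.le_sup (f := id) hj) h
  rw [min_eq_right hji]

lemma maxPart_le_of_Qfun_eq {m : ℕ →₀ ℕ} {i : ℕ} (h : Qfun m i = (msize m : ℤ)) :
    maxPart m ≤ i := by
  by_contra hlt
  push_neg at hlt
  have hne : m.support.Nonempty := by
    rcases m.support.eq_empty_or_nonempty with he | hne
    · simp [maxPart, he] at hlt
    · exact hne
  obtain ⟨M, hM, hMe⟩ := Finset.exists_mem_eq_sup m.support hne id
  have hMe' : maxPart m = M := hMe
  have hlt' : Qfun m i < (msize m : ℤ) := by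
    rw [msize_cast, Qfun]
    apply Finset.sum_lt_sum
    · intro j _
      have h : (min i j : ℤ) ≤ j := by exact_mod_cast min_le_right i j
      exact mul_le_mul_of_nonneg_right h (by positivity)
    · refine ⟨M, hM, ?_⟩
      have hmM : 0 < (m M : ℤ) := by
        have := Finsupp.mem_support_iff.mp hM
        positivity
      have hiM : (i : ℤ) < M := by exact_mod_cast (hMe' ▸ hlt)
      have : (min i M : ℤ) < M := by rw [min_eq_left hiM.le]; exact hiM
      exact mul_lt_mul_of_pos_right this hmM
  omega

lemma two_dvd_maxPart {m : ℕ →₀ ℕ} (h : ∀ j, m j ≠ 0 → 2 ∣ j) : 2 ∣ maxPart m := by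
  rcases m.support.eq_empty_or_nonempty with he | hne
  · simp [maxPart, he]
  · obtain ⟨M, hM, hMe⟩ := Finset.exists_mem_eq_sup m.support hne id
    have : maxPart m = M := hMe
    rw [this]
    exact h M (Finsupp.mem_support_iff.mp hM)


/-- Lemma 2.4 of the paper in type `C^{(1)}_n`: if the partitions
`ν^{(1)}, …, ν^{(n)}` satisfy the type `C` vacancy positivity
`p_i^{(a)} = Q_i(ν^{(a-1)}) − 2Q_i(ν^{(a)}) + Q_i(ν^{(a+1)}) ≥ 0` for
`k+1 ≤ a ≤ n−1`, `p_i^{(n)} = Q_{2i}(ν^{(n-1)}) − Q_{2i}(ν^{(n)}) ≥ 0`,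
have stable box counts `|ν^{(a)}| = |ν^{(a+1)}|` for `k ≤ a ≤ n−1`, and all
parts of `ν^{(n)}` are even, then the largest parts agree:
`ν^{(k+1)}_1 = ν^{(k+2)}_1 = ⋯ = ν^{(n)}_1`. -/
theorem stmt9 (n k : ℕ) (hk : k + 1 ≤ n) (ν : ℕ → (ℕ →₀ ℕ))
    (hzero : ∀ a, (ν a) 0 = 0)
    (hvac : ∀ a, k + 1 ≤ a → a ≤ n - 1 → ∀ i : ℕ,
      0 ≤ Qfun (ν (a - 1)) i - 2 * Qfun (ν a) i + Qfun (ν (a + 1)) i)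
    (hvacn : ∀ i : ℕ, 0 ≤ Qfun (ν (n - 1)) (2 * i) - Qfun (ν n) (2 * i))
    (hsize : ∀ a, k ≤ a → a ≤ n - 1 → msize (ν a) = msize (ν (a + 1)))
    (heven : ∀ j, (ν n) j ≠ 0 → 2 ∣ j) :
    ∀ a b, k + 1 ≤ a → a ≤ n → k + 1 ≤ b → b ≤ n →
      maxPart (ν a) = maxPart (ν b) := by
  have hn1 : 1 ≤ n := le_trans (Nat.le_add_left 1 k) hk
  -- box counts are constant on [k, n]
  have hsz : ∀ a, k ≤ a → a ≤ n → msize (ν a) = msize (ν k) := by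
    intro a ha
    induction a, ha using Nat.le_induction with
    | base => intro _; rfl
    | succ a ha ih =>
      intro han
      have h1 : msize (ν a) = msize (ν (a + 1)) := hsize a ha (by omega)
      rw [← h1]; exact ih (by omega)
  -- convexity: differences of Q along a are monotone
  have dmono : ∀ (i a b : ℕ), k ≤ a → a ≤ b → b + 1 ≤ n →
      Qfun (ν b) i - Qfun (ν (b + 1)) i ≤ Qfun (ν a) i - Qfun (ν (a + 1)) i := by
    intro i a b ha hab
    induction b, hab using Nat.le_induction with
    | base => intro _; exact le_refl _
    | succ b hab ih =>
      intro hbn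
      have h1 := hvac (b + 1) (by omega) (by omega) i
      rw [(by omega : b + 1 - 1 = b)] at h1
      have h2 := ih (by omega)
      linarith
  suffices H : ∀ a, k + 1 ≤ a → a ≤ n → maxPart (ν a) = maxPart (ν n) by
    intro a b ha han hb hbn; rw [H a ha han, H b hb hbn]
  intro a ha han
  -- Direction 1 : maxPart (ν a) ≤ maxPart (ν n), using the even index maxPart (ν n)
  obtain ⟨j, hj⟩ := two_dvd_maxPart (m := ν n) heven
  have hle : maxPart (ν a) ≤ maxPart (ν n) := by
    set i1 := maxPart (ν n) with hi1
    have hQn : Qfun (ν n) i1 = (msize (ν n) : ℤ) := Qfun_eq_of_maxPart_le le_rfl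
    have hdn : 0 ≤ Qfun (ν (n - 1)) i1 - Qfun (ν n) i1 := by
      have h := hvacn j
      rw [← hj] at h
      exact h
    have hstep1 : ∀ c, k ≤ c → c + 1 ≤ n → Qfun (ν (c + 1)) i1 ≤ Qfun (ν c) i1 := by
      intro c hc hcn
      have h := dmono i1 c (n - 1) hc (by omega) (by omega)
      rw [(by omega : n - 1 + 1 = n)] at h
      linarith
    have hchain1 : ∀ b, a ≤ b → b ≤ n → Qfun (ν b) i1 ≤ Qfun (ν a) i1 := by
      intro b hab
      induction b, hab using Nat.le_induction with
      | base => intro _; exact le_refl _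
      | succ b hab ih =>
        intro hbn
        exact le_trans (hstep1 b (by omega) (by omega)) (ih (by omega))
    have h1 := hchain1 n han le_rfl
    have h2 := Qfun_le_msize (ν a) i1
    have h3 : (msize (ν a) : ℤ) = (msize (ν n) : ℤ) := by
      rw [hsz a (by omega) han, hsz n (by omega) le_rfl]
    have hQa : Qfun (ν a) i1 = (msize (ν a) : ℤ) := by linarith
    exact maxPart_le_of_Qfun_eq hQa
  -- Direction 2 : ¬ maxPart (ν a) < maxPart (ν n), using index maxPart (ν n) - 1
  have hge : ¬ maxPart (ν a) < maxPart (ν n) := by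
    intro hlt
    set i2 := maxPart (ν n) - 1 with hi2
    have hQa : Qfun (ν a) i2 = (msize (ν a) : ℤ) := Qfun_eq_of_maxPart_le (by omega)
    have hda : Qfun (ν (a - 1)) i2 - Qfun (ν a) i2 ≤ 0 := by
      have h1 := Qfun_le_msize (ν (a - 1)) i2
      have heq : (msize (ν (a - 1)) : ℤ) = (msize (ν a) : ℤ) := by
        rw [hsz (a - 1) (by omega) (by omega), hsz a (by omega) han]
      linarith
    have hstep2 : ∀ c, a - 1 ≤ c → c + 1 ≤ n → Qfun (ν c) i2 ≤ Qfun (ν (c + 1)) i2 := by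
      intro c hc hcn
      have h := dmono i2 (a - 1) c (by omega) hc hcn
      rw [(by omega : a - 1 + 1 = a)] at h
      linarith
    have hchain2 : ∀ b, a ≤ b → b ≤ n → Qfun (ν a) i2 ≤ Qfun (ν b) i2 := by
      intro b hab
      induction b, hab using Nat.le_induction with
      | base => intro _; exact le_refl _
      | succ b hab ih =>
        intro hbn
        exact le_trans (ih (by omega)) (hstep2 b (by omega) (by omega))
    have h1 := hchain2 n han le_rfl
    have h2 := Qfun_le_msize (ν n) i2
    have h3 : (msize (ν a) : ℤ) = (msize (ν n) : ℤ) := by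
      rw [hsz a (by omega) han, hsz n (by omega) le_rfl]
    have hQn : Qfun (ν n) i2 = (msize (ν n) : ℤ) := by linarith
    have := maxPart_le_of_Qfun_eq hQn
    omega
  omega
end

section
/- Suppose partitions ν^{(k)}, ν^{(k+1)}, …, ν^{(n)} all have the same largest part w, equal total size, and satisfy p_{w-1}^{(a)} = Q_{w-1}(ν^{(a-1)}) − 2Q_{w-1}(ν^{(a)}) + Q_{w-1}(ν^{(a+1)}) ≥ 0 for k+1 ≤ a ≤ n−1 and p_{w-1}^{(n)} = Q_{w-1}(ν^{(n-1)}) − Q_{w-1}(ν^{(n)}) ≥ 0. Let h_a be the multiplicity of the part w in ν^{(a)}. If h_m = h_{m+1} = ⋯ = h_n for some minimal m ≥ k+1 with this property and m > k+1, then h_{k+1} < h_{k+2} < ⋯ < h_m; consequently m − k ≤ h_n, so h_a = h_n for all a ≥ k + h_n. -/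
lemma qfun_eq (m : ℕ →₀ ℕ) (w : ℕ) (hw : 1 ≤ w) (h : maxPart m = w) :
    Qfun m (w - 1) = (msize m : ℤ) - m w := by
  have h' : m.support.sup id = w := h
  have hle : ∀ j ∈ m.support, j ≤ w := by
    intro j hj
    have h2 := Finset.le_sup (f := id) hj
    simp only [id] at h2
    omega
  have key : ∀ j ∈ m.support,
      min ((w - 1 : ℕ) : ℤ) (j : ℤ) * m j = (j : ℤ) * m j - (if j = w then (m j : ℤ) else 0) := by
    intro j hj
    have hjw := hle j hj
    have hmj : min ((w - 1 : ℕ) : ℤ) (j : ℤ) = if j = w then (j : ℤ) - 1 else (j : ℤ) := by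
      split_ifs with hc
      · omega
      · omega
    rw [hmj]
    split_ifs with hc
    · ring
    · ring
  rw [Qfun, Finset.sum_congr rfl key, Finset.sum_sub_distrib]
  congr 1
  · rw [msize]; push_cast; rfl
  · rw [Finset.sum_ite_eq' m.support w (fun j => (m j : ℤ))]
    split_ifs with hws
    · rfl
    · simp [Finsupp.notMem_support_iff.mp hws]

/-- Key step of Proposition 2.5(1): let `ν^{(k)}, …, ν^{(n)}` have common
largest part `w`, equal total sizes, and satisfy the vacancy positivity at
column `w−1`. Write `h_a = m_w^{(a)}` for the multiplicity of the part `w` in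
`ν^{(a)}`. If `m` is minimal with `k+1 ≤ m` and `h_m = h_{m+1} = ⋯ = h_n`,
then (when `m > k+1`) `h_{k+1} < h_{k+2} < ⋯ < h_m`; consequently
`m − k ≤ h_n`, so `h_a = h_n` for all `a ≥ k + h_n`. -/
theorem stmt10 (n k w : ℕ) (hk : k + 1 ≤ n) (hw : 1 ≤ w)
    (ν : ℕ → (ℕ →₀ ℕ))
    (hmax : ∀ a, k ≤ a → a ≤ n → maxPart (ν a) = w)
    (hsize : ∀ a, k ≤ a → a ≤ n - 1 → msize (ν a) = msize (ν (a + 1)))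
    (hvac : ∀ a, k + 1 ≤ a → a ≤ n - 1 →
      0 ≤ Qfun (ν (a - 1)) (w - 1) - 2 * Qfun (ν a) (w - 1) + Qfun (ν (a + 1)) (w - 1))
    (hvacn : 0 ≤ Qfun (ν (n - 1)) (w - 1) - Qfun (ν n) (w - 1))
    (m : ℕ) (hm1 : k + 1 ≤ m) (hm2 : m ≤ n)
    (hconst : ∀ a, m ≤ a → a ≤ n → (ν a) w = (ν n) w)
    (hmin : ∀ m', k + 1 ≤ m' → m' ≤ n →
      (∀ a, m' ≤ a → a ≤ n → (ν a) w = (ν n) w) → m ≤ m') :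
    (k + 1 < m → ∀ a, k + 1 ≤ a → a < m → (ν a) w < (ν (a + 1)) w) ∧
    m - k ≤ (ν n) w ∧
    (∀ a, k + (ν n) w ≤ a → a ≤ n → (ν a) w = (ν n) w) := by
  -- Q rewrite for each a
  have hQ : ∀ a, k ≤ a → a ≤ n → Qfun (ν a) (w - 1) = (msize (ν a) : ℤ) - (ν a) w :=
    fun a h1 h2 => qfun_eq (ν a) w hw (hmax a h1 h2)
  -- sizes are constant
  have hN : ∀ a, k ≤ a → a ≤ n → msize (ν a) = msize (ν k) := by
    intro a h1 h2
    induction a with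
    | zero =>
      have : k = 0 := by omega
      rw [this]
    | succ b ih =>
      rcases Nat.lt_or_ge k (b + 1) with h | h
      · have hb : k ≤ b := by omega
        have := hsize b hb (by omega)
        rw [← this, ih hb (by omega)]
      · have : b + 1 = k := by omega
        rw [this]
  -- the key quantity: multiplicity of w, as an integer
  set H : ℕ → ℤ := fun a => ((ν a) w : ℤ) with hH
  have hstep : ∀ a, k + 1 ≤ a → a ≤ n - 1 → H (a - 1) + H (a + 1) ≤ 2 * H a := by
    intro a h1 h2
    have hv := hvac a h1 h2
    rw [hQ (a - 1) (by omega) (by omega), hQ a (by omega) (by omega),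
      hQ (a + 1) (by omega) (by omega),
      hN (a - 1) (by omega) (by omega), hN a (by omega) (by omega),
      hN (a + 1) (by omega) (by omega)] at hv
    simp only [hH]
    linarith
  -- differences
  set D : ℕ → ℤ := fun a => H (a + 1) - H a with hDdef
  have hDanti : ∀ a b, k ≤ a → a ≤ b → b ≤ n - 1 → D b ≤ D a := by
    intro a b ha hab hb
    induction b, hab using Nat.le_induction with
    | base => exact le_refl _
    | succ b hab ih =>
      have h1 : H b + H (b + 2) ≤ 2 * H (b + 1) := by
        have := hstep (b + 1) (by omega) hb
        simpa using this
      have : D (b + 1) ≤ D b := by simp only [hDdef]; linarith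
      exact le_trans this (ih (by omega))
  have hDn : 0 ≤ D (n - 1) := by
    have := hvacn
    rw [hQ (n - 1) (by omega) (by omega), hQ n (by omega) le_rfl,
      hN (n - 1) (by omega) (by omega), hN n (by omega) le_rfl] at this
    have hn1 : n - 1 + 1 = n := by omega
    simp only [hDdef, hH, hn1]
    linarith
  have hDpos : ∀ a, k ≤ a → a ≤ n - 1 → 0 ≤ D a :=
    fun a h1 h2 => le_trans hDn (hDanti a (n - 1) h1 h2 le_rfl)
  have hmono : ∀ a b, k ≤ a → a ≤ b → b ≤ n → H a ≤ H b := by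
    intro a b ha hab hb
    induction b, hab using Nat.le_induction with
    | base => exact le_rfl
    | succ b hab ih =>
      have h0 := hDpos b (by omega) (by omega)
      have : H b ≤ H (b + 1) := by simp only [hDdef] at h0; linarith
      exact le_trans (ih (by omega)) this
  -- w appears in ν n, so H n ≥ 1
  have hHn1 : 1 ≤ H n := by
    have hmx := hmax n (by omega) le_rfl
    have hne : (ν n).support.Nonempty := by
      by_contra hcon
      rw [Finset.not_nonempty_iff_eq_empty] at hcon
      rw [maxPart, hcon] at hmx
      simp at hmx; omega
    obtain ⟨j, hj, hjeq⟩ := Finset.exists_mem_eq_sup _ hne id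
    rw [maxPart, hjeq] at hmx
    have hj0 : (ν n) j ≠ 0 := Finsupp.mem_support_iff.mp hj
    simp only [id] at hmx
    subst hmx
    simp only [hH]
    omega
  rcases eq_or_lt_of_le hm1 with heq | hlt
  · -- m = k + 1
    refine ⟨fun h => absurd h (by omega), ?_, ?_⟩
    · have : m - k = 1 := by omega
      rw [this]
      simp only [hH] at hHn1; omega
    · intro a h1 h2
      apply hconst a _ h2
      simp only [hH] at hHn1; omega
  · -- m > k + 1
    have hne : (ν (m - 1)) w ≠ (ν n) w := by
      intro hcon
      have : ∀ a, m - 1 ≤ a → a ≤ n → (ν a) w = (ν n) w := by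
        intro a ha1 ha2
        rcases eq_or_lt_of_le ha1 with rfl | h
        · exact hcon
        · exact hconst a (by omega) ha2
      have := hmin (m - 1) (by omega) (by omega) this
      omega
    have hlt1 : 1 ≤ D (m - 1) := by
      have h1 : H (m - 1) ≤ H m := hmono (m - 1) m (by omega) (by omega) hm2
      have h2 : (ν m) w = (ν n) w := hconst m le_rfl hm2
      have hm1' : m - 1 + 1 = m := by omega
      simp only [hDdef, hH, hm1'] at h1 ⊢
      omega
    have hD1 : ∀ a, k ≤ a → a ≤ m - 1 → 1 ≤ D a := by
      intro a h1 h2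
      exact le_trans hlt1 (hDanti a (m - 1) h1 h2 (by omega))
    -- accumulate
    have hacc : ∀ b, k ≤ b → b ≤ m → ((b : ℤ) - k) + H k ≤ H b := by
      intro b hb1 hb2
      induction b, hb1 using Nat.le_induction with
      | base => simp
      | succ b hb ih =>
        have h1 := hD1 b (by omega) (by omega)
        simp only [hDdef] at h1
        have := ih (by omega)
        push_cast
        linarith
    have hmn : (↑m - ↑k : ℤ) ≤ H n := by
      have h1 := hacc m (by omega) le_rfl
      have h2 : (ν m) w = (ν n) w := hconst m le_rfl hm2
      have h3 : (0 : ℤ) ≤ H k := by simp only [hH]; positivity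
      simp only [hH] at h1 h2 ⊢
      omega
    refine ⟨?_, ?_, ?_⟩
    · intro _ a ha1 ha2
      have := hD1 a (by omega) (by omega)
      simp only [hDdef, hH] at this
      omega
    · simp only [hH] at hmn; omega
    · intro a ha1 ha2
      apply hconst a _ ha2
      simp only [hH] at hmn
      omega
end

section
/- Let m_i^{(a)} (1 ≤ a ≤ n, i ≥ 1) be nonnegative integers, finitely many nonzero, and fix a row index η_a for each a in an interval [k, l] with η_{a-1} ≥ η_a ≥ η_{a+1}. Define the type-A charge c(ν) = (1/2)·Σ_{a,b} C_{ab} Σ_{j,k} min(j,k) m_j^{(a)} m_k^{(b)} − Σ_{a,j,k} min(j,k) L_j^{(a)} m_k^{(a)}, where C is the Cartan-like matrix C_{ab} = 2δ_{ab} − δ_{a,b-1} − δ_{a,b+1} (with boundary modification C_{ll} = 1). If m̃ is obtained from m by replacing, for each a ∈ [k,l], one part of size η_a by a part of size η_a − 1 (i.e. m̃_i^{(a)} = m_i^{(a)} − δ_{i,η_a} + δ_{i,η_a−1}), then c(ν) − c(ν̃) = 2Σ_{k≤a<l, i≥η_a} m_i^{(a)} − Σ_{k-1≤a<l, i≥η_{a+1}}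 m_i^{(a)} − Σ_{k≤a<l, i≥η_a} m_i^{(a+1)} + Σ_{i≥η_l} m_i^{(l)} − Σ_{k≤a<l}(1 − δ_{η_a η_{a+1}}) − 1/2 − Σ_{k≤a≤l, i≥η_a} L_i^{(a)}. -/
open Finset

/-- `tailSum f t = Σ_{i ≥ t} f i` for a finitely supported `f`. -/
def tailSum (f : ℕ →₀ ℕ) (t : ℕ) : ℕ :=
  (f.support.filter fun i => t ≤ i).sum fun i => f i

/-- The pairing `Σ_{j,j'} min(j,j') f_j g_{j'}`. -/
def pairQ (f g : ℕ →₀ ℕ) : ℚ :=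
  f.support.sum fun j => g.support.sum fun j' => (min j j' : ℚ) * f j * g j'

/-- The Cartan-like matrix `C_{ab} = 2δ_{ab} − δ_{a,b-1} − δ_{a,b+1}` with the
boundary modification `C_{ll} = 1`. -/
def cartanA (l a b : ℕ) : ℤ :=
  (if a = b then (if a = l then 1 else 2) else 0)
    - (if a + 1 = b then 1 else 0) - (if b + 1 = a then 1 else 0)

/-- The type-`A` charge
`c(ν) = (1/2)·Σ_{a,b} C_{ab} Σ_{j,k} min(j,k) m_j^{(a)} m_k^{(b)}
        − Σ_{a,j,k} min(j,k) L_j^{(a)} m_k^{(a)}`. -/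
noncomputable def chargeA (l : ℕ) (L m : ℕ → ℕ →₀ ℕ) : ℚ :=
  (1 / 2) * ((Icc 1 l).sum fun a => (Icc 1 l).sum fun b =>
      (cartanA l a b : ℚ) * pairQ (m a) (m b))
    - (Icc 1 l).sum fun a => pairQ (L a) (m a)

/-!
Both parts of the charge are built from the bilinear form `Q(f, g) = Σ min(j, j') f_j g_{j'}`.
Over `ℚ` the step `δ` adds `e_{η_a - 1} - e_{η_a}` to `m^{(a)}` for `k ≤ a ≤ l`. Since
`min(j, s - 1) - min(j, s) = -[s ≤ j]`, pairing with such a vector gives minus a tail sum, and two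
of them pair to `δ_{η_a η_b}`. Expanding `c(ν̃)` bilinearly and summing against the tridiagonal
matrix `C` leaves exactly the terms of the formula.
-/

namespace Charge

theorem cartanA_symm (l a b : ℕ) : cartanA l a b = cartanA l b a := by
  simp only [cartanA]
  split_ifs <;> omega

theorem sum_cartanA_mul_add_swap (l : ℕ) (G : ℕ → ℕ → ℚ) :
    ∑ a ∈ Icc 1 l, ∑ b ∈ Icc 1 l, (cartanA l a b : ℚ) * (G a b + G b a) =
      2 * ∑ a ∈ Icc 1 l, ∑ b ∈ Icc 1 l, (cartanA l a b : ℚ) * G a b := by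
  have hswap : ∑ a ∈ Icc 1 l, ∑ b ∈ Icc 1 l, (cartanA l a b : ℚ) * G b a =
      ∑ a ∈ Icc 1 l, ∑ b ∈ Icc 1 l, (cartanA l a b : ℚ) * G a b := by
    rw [sum_comm]
    simp only [cartanA_symm l]
  simp only [mul_add, sum_add_distrib, hswap]
  ring

theorem sum_cartanA_mul {l : ℕ} (hl : 1 ≤ l) (F : ℕ → ℕ → ℚ) :
    ∑ a ∈ Icc 1 l, ∑ b ∈ Icc 1 l, (cartanA l a b : ℚ) * F a b =
      2 * ∑ a ∈ Ico 1 l, F a a + F l l - ∑ a ∈ Ico 1 l, (F a (a + 1) + F (a + 1) a) := by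
  simp only [cartanA, Int.cast_sub, Int.cast_ite, Int.cast_one, Int.cast_ofNat, Int.cast_zero,
    sub_mul, ite_mul, one_mul, zero_mul, sum_sub_distrib]
  rw [sum_comm (f := fun a b => if b + 1 = a then F a b else 0)]
  simp only [sum_ite_eq]
  have hshift : (Icc 1 l).filter (fun x => x + 1 ∈ Icc 1 l) = Ico 1 l := by
    ext; simp only [mem_filter, mem_Icc, mem_Ico]; omega
  rw [sum_congr rfl fun x hx => if_pos hx, ← sum_filter, ← sum_filter, hshift,
    ← Ico_insert_right hl, sum_insert (by simp), if_pos rfl,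
    sum_congr rfl fun x hx => if_neg (mem_Ico.1 hx).2.ne, ← mul_sum, sum_add_distrib]
  ring

noncomputable abbrev toRat (f : ℕ →₀ ℕ) : ℕ →₀ ℚ := Finsupp.mapRange (↑) Nat.cast_zero f

noncomputable def minForm : LinearMap.BilinForm ℚ (ℕ →₀ ℚ) :=
  Finsupp.linearCombination ℚ fun j => Finsupp.linearCombination ℚ fun j' => (min j j' : ℚ)

noncomputable def boxDelta (s : ℕ) : ℕ →₀ ℚ := Finsupp.single (s - 1) 1 - Finsupp.single s 1

theorem minForm_apply (f g : ℕ →₀ ℚ) :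
    minForm f g = f.sum fun j x => g.sum fun j' y => (min j j' : ℚ) * x * y := by
  simp only [minForm, Finsupp.linearCombination_apply, Finsupp.sum, LinearMap.coe_sum,
    LinearMap.coe_smul, Finset.sum_apply, Pi.smul_apply, smul_eq_mul, mul_sum]
  exact sum_congr rfl fun j _ => sum_congr rfl fun j' _ => by ring

theorem minForm_comm (f g : ℕ →₀ ℚ) : minForm f g = minForm g f := by
  rw [minForm_apply, minForm_apply, Finsupp.sum_comm]
  exact Finsupp.sum_congr fun j _ => Finsupp.sum_congr fun j' _ => by rw [min_comm]; ring

theorem pairQ_eq_minForm (f g : ℕ →₀ ℕ) : pairQ f g = minForm (toRat f) (toRat g) := by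
  have hsupp (h : ℕ →₀ ℕ) : (toRat h).support = h.support :=
    Finsupp.support_mapRange_of_injective _ h Nat.cast_injective
  simp [minForm_apply, pairQ, Finsupp.sum, hsupp]

theorem minForm_single_right (f : ℕ →₀ ℚ) (t : ℕ) :
    minForm f (Finsupp.single t 1) = f.sum fun j x => (min j t : ℚ) * x := by
  simp [minForm, Finsupp.linearCombination_apply, mul_comm]

theorem minForm_single_single (s t : ℕ) :
    minForm (Finsupp.single s 1) (Finsupp.single t 1) = min (s : ℚ) t := by
  simp [minForm_single_right]

theorem minForm_toRat_boxDelta {s : ℕ} (hs : 1 ≤ s) (f : ℕ →₀ ℕ) :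
    minForm (toRat f) (boxDelta s) = -tailSum f s := by
  rw [boxDelta, map_sub, minForm_single_right, minForm_single_right, ← Finsupp.sum_sub,
    Finsupp.sum_mapRange_index (by simp), tailSum, Nat.cast_sum, sum_filter, ← sum_neg_distrib]
  refine sum_congr rfl fun j _ => ?_
  dsimp only
  rw [Nat.cast_sub hs, Nat.cast_one]
  rcases le_or_gt s j with h | h
  · have h' : (s : ℚ) ≤ j := by exact_mod_cast h
    rw [if_pos h, min_eq_right h', min_eq_right (by linarith)]
    ring
  · have h' : (j : ℚ) ≤ s - 1 := by
      rw [le_sub_iff_add_le]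
      exact_mod_cast h
    rw [if_neg (by omega), min_eq_left h', min_eq_left (by linarith)]
    ring

theorem minForm_boxDelta_boxDelta {s t : ℕ} (hs : 1 ≤ s) (ht : 1 ≤ t) :
    minForm (boxDelta s) (boxDelta t) = if s = t then 1 else 0 := by
  have key : min (s - 1) (t - 1) + min s t =
      min (s - 1) t + min s (t - 1) + if s = t then 1 else 0 := by
    split_ifs <;> omega
  have := congrArg (Nat.cast : ℕ → ℚ) key
  push_cast at this
  simp only [boxDelta, map_sub, LinearMap.sub_apply, minForm_single_single]
  split_ifs at this ⊢ <;> linarith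

theorem toRat_boxRemoval {f : ℕ →₀ ℕ} {s : ℕ} (hs : 1 ≤ s) (hf : 1 ≤ f s) :
    toRat (f + Finsupp.single (s - 1) 1 - Finsupp.single s 1) = toRat f + boxDelta s := by
  ext i
  simp only [boxDelta, Finsupp.mapRange_apply, Finsupp.tsub_apply, Finsupp.add_apply,
    Finsupp.sub_apply, Finsupp.single_apply]
  split_ifs with h1 h2 <;> subst_vars
  · omega
  · push_cast; ring
  · rw [add_zero, Nat.cast_sub hf]; push_cast; ring
  · simp

theorem pairQ_sub_pairQ {f f' g g' : ℕ →₀ ℕ} {x y : ℕ →₀ ℚ}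
    (hf : toRat f' = toRat f + x) (hg : toRat g' = toRat g + y) :
    pairQ f g - pairQ f' g' = -(minForm (toRat f) y + minForm (toRat g) x + minForm x y) := by
  rw [pairQ_eq_minForm, pairQ_eq_minForm, hf, hg, minForm_comm (toRat g)]
  simp only [map_add, LinearMap.add_apply]
  ring

theorem chargeA_sub_chargeA (l : ℕ) (L m m' : ℕ → ℕ →₀ ℕ) :
    chargeA l L m - chargeA l L m' =
      1 / 2 * ∑ a ∈ Icc 1 l, ∑ b ∈ Icc 1 l,
          (cartanA l a b : ℚ) * (pairQ (m a) (m b) - pairQ (m' a) (m' b))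
        - ∑ a ∈ Icc 1 l, (pairQ (L a) (m a) - pairQ (L a) (m' a)) := by
  simp only [chargeA, mul_sub, sum_sub_distrib]
  ring

section BoxRemoval

variable {k l : ℕ} {η : ℕ → ℕ}

noncomputable def boxShift (k l : ℕ) (η : ℕ → ℕ) (a : ℕ) : ℕ →₀ ℚ :=
  if a ∈ Icc k l then boxDelta (η a) else 0

theorem minForm_toRat_boxShift (hη : ∀ a, k ≤ a → a ≤ l → 1 ≤ η a) (f : ℕ →₀ ℕ) (b : ℕ) :
    minForm (toRat f) (boxShift k l η b) =
      -if b ∈ Icc k l then (tailSum f (η b) : ℚ) else 0 := by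
  unfold boxShift
  split_ifs with hb
  · obtain ⟨hkb, hbl⟩ := mem_Icc.1 hb
    exact minForm_toRat_boxDelta (hη b hkb hbl) f
  · simp

theorem minForm_boxShift_boxShift (hη : ∀ a, k ≤ a → a ≤ l → 1 ≤ η a) (a b : ℕ) :
    minForm (boxShift k l η a) (boxShift k l η b) =
      if a ∈ Icc k l ∧ b ∈ Icc k l ∧ η a = η b then 1 else 0 := by
  unfold boxShift
  by_cases ha : a ∈ Icc k l <;> by_cases hb : b ∈ Icc k l <;> simp only [ha, hb, if_true,
    if_false, true_and, false_and, and_false, map_zero, LinearMap.zero_apply]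
  · exact minForm_boxDelta_boxDelta (hη a (mem_Icc.1 ha).1 (mem_Icc.1 ha).2)
      (hη b (mem_Icc.1 hb).1 (mem_Icc.1 hb).2)

theorem toRat_boxRemoval_eq {m m' : ℕ → ℕ →₀ ℕ} (hη : ∀ a, k ≤ a → a ≤ l → 1 ≤ η a)
    (hrow : ∀ a, k ≤ a → a ≤ l → 1 ≤ (m a) (η a))
    (hm' : ∀ a, m' a = if k ≤ a ∧ a ≤ l
        then m a + Finsupp.single (η a - 1) 1 - Finsupp.single (η a) 1
        else m a) (a : ℕ) :
    toRat (m' a) = toRat (m a) + boxShift k l η a := by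
  rw [hm', boxShift]
  by_cases ha : k ≤ a ∧ a ≤ l
  · rw [if_pos ha, if_pos (mem_Icc.2 ha)]
    exact toRat_boxRemoval (hη a ha.1 ha.2) (hrow a ha.1 ha.2)
  · rw [if_neg ha, if_neg (fun h => ha (mem_Icc.1 h)), add_zero]

theorem pairQ_sub_pairQ_boxShift {m m' : ℕ → ℕ →₀ ℕ} (hη : ∀ a, k ≤ a → a ≤ l → 1 ≤ η a)
    (hm' : ∀ a, toRat (m' a) = toRat (m a) + boxShift k l η a) (a b : ℕ) :
    pairQ (m a) (m b) - pairQ (m' a) (m' b) =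
      (if b ∈ Icc k l then (tailSum (m a) (η b) : ℚ) else 0)
        + (if a ∈ Icc k l then (tailSum (m b) (η a) : ℚ) else 0)
        - (if a ∈ Icc k l ∧ b ∈ Icc k l ∧ η a = η b then 1 else 0) := by
  rw [pairQ_sub_pairQ (hm' a) (hm' b), minForm_toRat_boxShift hη, minForm_toRat_boxShift hη,
    minForm_boxShift_boxShift hη]
  ring

theorem pairQ_sub_pairQ_boxShift_right {m m' : ℕ → ℕ →₀ ℕ}
    (hη : ∀ a, k ≤ a → a ≤ l → 1 ≤ η a)
    (hm' : ∀ a, toRat (m' a) = toRat (m a) + boxShift k l η a) (f : ℕ →₀ ℕ) (a : ℕ) :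
    pairQ f (m a) - pairQ f (m' a) = if a ∈ Icc k l then (tailSum f (η a) : ℚ) else 0 := by
  rw [pairQ_sub_pairQ (add_zero (toRat f)).symm (hm' a), minForm_toRat_boxShift hη]
  simp

theorem Ico_one_inter_Icc (hk : 1 ≤ k) : Ico 1 l ∩ Icc k l = Ico k l := by
  ext; simp only [mem_inter, mem_Ico, mem_Icc]; omega

theorem sum_cartanA_tailSum (hk : 1 ≤ k) (hkl : k ≤ l) {m : ℕ → ℕ →₀ ℕ} (hm0 : m 0 = 0) :
    ∑ a ∈ Icc 1 l, ∑ b ∈ Icc 1 l,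
        (cartanA l a b : ℚ) * (if b ∈ Icc k l then (tailSum (m a) (η b) : ℚ) else 0) =
      2 * ∑ a ∈ Ico k l, (tailSum (m a) (η a) : ℚ) + tailSum (m l) (η l)
        - ∑ a ∈ Ico (k - 1) l, (tailSum (m a) (η (a + 1)) : ℚ)
        - ∑ a ∈ Ico k l, (tailSum (m (a + 1)) (η a) : ℚ) := by
  have hshift : (Ico 1 l).filter (fun a => a + 1 ∈ Icc k l) = (Ico (k - 1) l).erase 0 := by
    ext; simp only [mem_filter, mem_erase, mem_Ico, mem_Icc]; omega
  have hm0_tail : (tailSum (m 0) (η 1) : ℚ) = 0 := by simp [hm0, tailSum]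
  rw [sum_cartanA_mul (hk.trans hkl), sum_add_distrib, sum_ite_mem, sum_ite_mem,
    Ico_one_inter_Icc hk, if_pos (mem_Icc.2 ⟨hkl, le_rfl⟩), ← sum_filter, hshift,
    sum_erase (f := fun a => (tailSum (m a) (η (a + 1)) : ℚ)) _ hm0_tail]
  ring

theorem sum_cartanA_boxShift (hk : 1 ≤ k) (hkl : k ≤ l) :
    ∑ a ∈ Icc 1 l, ∑ b ∈ Icc 1 l, (cartanA l a b : ℚ) *
        (if a ∈ Icc k l ∧ b ∈ Icc k l ∧ η a = η b then 1 else 0) =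
      2 * ∑ a ∈ Ico k l, (if η a = η (a + 1) then (0 : ℚ) else 1) + 1 := by
  rw [sum_cartanA_mul (hk.trans hkl)]
  have hdiag : ∀ a ∈ Ico 1 l,
      2 * (if a ∈ Icc k l ∧ a ∈ Icc k l ∧ η a = η a then (1 : ℚ) else 0)
      - ((if a ∈ Icc k l ∧ a + 1 ∈ Icc k l ∧ η a = η (a + 1) then 1 else 0)
        + (if a + 1 ∈ Icc k l ∧ a ∈ Icc k l ∧ η (a + 1) = η a then 1 else 0))
      = if a ∈ Icc k l then 2 * (if η a = η (a + 1) then 0 else 1) else 0 := by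
    intro a ha
    obtain ⟨-, hal⟩ := mem_Ico.1 ha
    by_cases hka : k ≤ a
    · have ha' : a ∈ Icc k l := mem_Icc.2 ⟨hka, hal.le⟩
      have ha'' : a + 1 ∈ Icc k l := mem_Icc.2 ⟨by omega, hal⟩
      simp only [ha', ha'', true_and, eq_comm (a := η (a + 1)), if_true]
      split_ifs <;> norm_num
    · have ha' : a ∉ Icc k l := fun h => hka (mem_Icc.1 h).1
      simp [ha']
  rw [mul_sum, ← sub_add_eq_add_sub, ← sum_sub_distrib, sum_congr rfl hdiag, sum_ite_mem,
    Ico_one_inter_Icc hk, if_pos ⟨mem_Icc.2 ⟨hkl, le_rfl⟩, mem_Icc.2 ⟨hkl, le_rfl⟩, rfl⟩, mul_sum]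

end BoxRemoval

end Charge

open Charge

theorem stmt11_general (k l : ℕ) (hk : 1 ≤ k) (hkl : k ≤ l)
    (L m : ℕ → ℕ →₀ ℕ) (hm0 : m 0 = 0)
    (η : ℕ → ℕ)
    (hη1 : ∀ a, k ≤ a → a ≤ l → 1 ≤ η a)
    (hrow : ∀ a, k ≤ a → a ≤ l → 1 ≤ (m a) (η a))
    (m' : ℕ → ℕ →₀ ℕ)
    (hm' : ∀ a, m' a = if k ≤ a ∧ a ≤ l
        then m a + Finsupp.single (η a - 1) 1 - Finsupp.single (η a) 1
        else m a) :
    chargeA l L m - chargeA l L m' =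
      2 * ((Ico k l).sum fun a => (tailSum (m a) (η a) : ℚ))
        - ((Ico (k - 1) l).sum fun a => (tailSum (m a) (η (a + 1)) : ℚ))
        - ((Ico k l).sum fun a => (tailSum (m (a + 1)) (η a) : ℚ))
        + (tailSum (m l) (η l) : ℚ)
        - ((Ico k l).sum fun a => if η a = η (a + 1) then (0 : ℚ) else 1)
        - 1 / 2
        - ((Icc k l).sum fun a => (tailSum (L a) (η a) : ℚ)) := by
  have hstep := toRat_boxRemoval_eq hη1 hrow hm'
  rw [chargeA_sub_chargeA]
  simp only [pairQ_sub_pairQ_boxShift hη1 hstep, pairQ_sub_pairQ_boxShift_right hη1 hstep,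
    mul_sub, sum_sub_distrib]
  rw [sum_cartanA_mul_add_swap, sum_cartanA_tailSum hk hkl hm0, sum_cartanA_boxShift hk hkl,
    sum_ite_mem, inter_eq_right.2 (Icc_subset_Icc hk le_rfl)]
  ring

/-- Lemma 4.1 of the paper (change of charge under one box-removal step `δ`):
if `m̃_i^{(a)} = m_i^{(a)} − δ_{i,η_a} + δ_{i,η_a−1}` for `k ≤ a ≤ l`
(one part of size `η_a` shortened by one in each color of `[k,l]`, with
`η_{a-1} ≥ η_a ≥ η_{a+1}`), then
`c(ν) − c(ν̃) = 2Σ_{k≤a<l, i≥η_a} m_i^{(a)} − Σ_{k-1≤a<l, i≥η_{a+1}} m_i^{(a)}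
 − Σ_{k≤a<l, i≥η_a} m_i^{(a+1)} + Σ_{i≥η_l} m_i^{(l)}
 − Σ_{k≤a<l}(1 − δ_{η_a η_{a+1}}) − 1/2 − Σ_{k≤a≤l, i≥η_a} L_i^{(a)}`. -/
theorem stmt11 (k l : ℕ) (hk : 1 ≤ k) (hkl : k ≤ l)
    (L m : ℕ → ℕ →₀ ℕ) (hm0 : m 0 = 0)
    (η : ℕ → ℕ)
    (hη1 : ∀ a, k ≤ a → a ≤ l → 1 ≤ η a)
    (hηmono : ∀ a, k ≤ a → a < l → η (a + 1) ≤ η a)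
    (hrow : ∀ a, k ≤ a → a ≤ l → 1 ≤ (m a) (η a))
    (m' : ℕ → ℕ →₀ ℕ)
    (hm' : ∀ a, m' a = if k ≤ a ∧ a ≤ l
        then m a + Finsupp.single (η a - 1) 1 - Finsupp.single (η a) 1
        else m a) :
    chargeA l L m - chargeA l L m' =
      2 * ((Ico k l).sum fun a => (tailSum (m a) (η a) : ℚ))
        - ((Ico (k - 1) l).sum fun a => (tailSum (m a) (η (a + 1)) : ℚ))
        - ((Ico k l).sum fun a => (tailSum (m (a + 1)) (η a) : ℚ))
        + (tailSum (m l) (η l) : ℚ)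
        - ((Ico k l).sum fun a => if η a = η (a + 1) then (0 : ℚ) else 1)
        - 1 / 2
        - ((Icc k l).sum fun a => (tailSum (L a) (η a) : ℚ)) :=
  stmt11_general k l hk hkl L m hm0 η hη1 hrow m' hm'
end

section
/- With notation as in the charge-difference lemma, let p_i^{(a)} = Σ_j L_j^{(a)} min(i,j) + Q_i^{(a-1)} − 2Q_i^{(a)} + Q_i^{(a+1)} be the vacancy numbers (with the boundary modification at a = l), where Q_i^{(a)} = Σ_j min(i,j)m_j^{(a)}, and let p̃ be the vacancy numbers after the box-removal m̃_i^{(a)} = m_i^{(a)} − δ_{i,η_a} + δ_{i,η_a−1} for k ≤ a ≤ l with η_{a-1} ≥ η_a ≥ η_{a+1}. Then for each k ≤ a ≤ l: p_{η_a}^{(a)} − p̃_{η_a−1}^{(a)} = Σ_{i≥η_a} L_i^{(a)} + Σ_{i≥η_a} m_i^{(a-1)} − 2Σ_{i≥η_a} m_i^{(a)} + Σ_{i≥η_a} m_i^{(a+1)} + 1 − δ_{η_a, η_{a+1}}. -/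
open Finset

/-- `QfunZ m i = Σ_j min(i,j)·m_j`. -/
def QfunZ (m : ℕ →₀ ℕ) (i : ℕ) : ℤ := m.support.sum fun j => (min i j : ℤ) * m j

/-- Type-`A` vacancy number
`p_i^{(a)} = Σ_j L_j^{(a)} min(i,j) + Q_i^{(a-1)} − 2Q_i^{(a)} + Q_i^{(a+1)}`,
with the boundary modification at `a = l` (coefficient of `Q^{(l)}` is `−1`
and no `Q^{(l+1)}`-term). -/
def vacancyA (l : ℕ) (L m : ℕ → ℕ →₀ ℕ) (a i : ℕ) : ℤ :=
  ((L a).support.sum fun j => ((L a) j : ℤ) * (min i j : ℤ))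
    + QfunZ (m (a - 1)) i
    - (if a = l then 1 else 2) * QfunZ (m a) i
    + (if a = l then 0 else QfunZ (m (a + 1)) i)

lemma tailSum_cast (f : ℕ →₀ ℕ) (t : ℕ) :
    (tailSum f t : ℤ) = (f.support.filter fun i => t ≤ i).sum fun i => (f i : ℤ) := by
  simp [tailSum]

lemma min_cast_sub (i j : ℕ) (hi : 1 ≤ i) :
    min (i : ℤ) (j : ℤ) - min (((i-1 : ℕ)) : ℤ) (j : ℤ) = if i ≤ j then 1 else 0 := by
  split <;> omega

lemma sum_min_mul_sub (f : ℕ →₀ ℕ) (i : ℕ) (hi : 1 ≤ i) :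
    ((f.support.sum fun j => min (i : ℤ) (j : ℤ) * f j)
      - f.support.sum fun j => min (((i-1:ℕ)) : ℤ) (j : ℤ) * f j) = tailSum f i := by
  rw [← Finset.sum_sub_distrib, tailSum_cast, Finset.sum_filter]
  apply Finset.sum_congr rfl
  intro j _
  rw [← sub_mul, min_cast_sub i j hi]
  split <;> simp

lemma QfunZ_sub (f : ℕ →₀ ℕ) (i : ℕ) (hi : 1 ≤ i) :
    QfunZ f i - QfunZ f (i-1) = tailSum f i := sum_min_mul_sub f i hi

lemma sum_mul_min_sub (f : ℕ →₀ ℕ) (i : ℕ) (hi : 1 ≤ i) :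
    ((f.support.sum fun j => (f j : ℤ) * min (i : ℤ) (j : ℤ))
      - f.support.sum fun j => (f j : ℤ) * min (((i-1:ℕ)) : ℤ) (j : ℤ)) = tailSum f i := by
  simp_rw [mul_comm]
  exact sum_min_mul_sub f i hi

lemma QfunZ_subset (m : ℕ →₀ ℕ) (S : Finset ℕ) (h : m.support ⊆ S) (i : ℕ) :
    QfunZ m i = S.sum fun j => min (i : ℤ) (j : ℤ) * m j := by
  refine Finset.sum_subset h ?_
  intro j _ hj
  rw [Finsupp.notMem_support_iff] at hj
  simp [hj]

lemma QfunZ_shift (m : ℕ →₀ ℕ) (s : ℕ) (hs : 1 ≤ s) (hms : 1 ≤ m s) (i : ℕ) :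
    QfunZ (m + Finsupp.single (s-1) 1 - Finsupp.single s 1) i
      = QfunZ m i + min (i : ℤ) ((s-1 : ℕ) : ℤ) - min (i : ℤ) (s : ℤ) := by
  set m' := m + Finsupp.single (s-1) 1 - Finsupp.single s 1 with hm'
  have hne : s - 1 ≠ s := by omega
  have hval : ∀ j, (m' j : ℤ)
      = (m j : ℤ) + (if j = s-1 then 1 else 0) - (if j = s then 1 else 0) := by
    intro j
    rw [hm', Finsupp.tsub_apply, Finsupp.add_apply, Finsupp.single_apply, Finsupp.single_apply]
    split_ifs <;> subst_vars <;> omega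
  set S := insert (s-1) (insert s m.support) with hS
  have hsub : m.support ⊆ S := by intro x hx; simp [hS, hx]
  have hsub' : m'.support ⊆ S := by
    intro x hx
    rw [Finsupp.mem_support_iff] at hx
    by_contra hxS
    simp only [hS, Finset.mem_insert, Finsupp.mem_support_iff, not_or, not_not] at hxS
    obtain ⟨h1, h2, h3⟩ := hxS
    have := hval x
    rw [if_neg h1, if_neg h2, h3] at this
    omega
  rw [QfunZ_subset m' S hsub' i, QfunZ_subset m S hsub i]
  have key : ∀ j ∈ S, min (i:ℤ) (j:ℤ) * m' j
      = min (i:ℤ) (j:ℤ) * m j + (if j = s-1 then min (i:ℤ) ((s-1:ℕ):ℤ) else 0)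
        - (if j = s then min (i:ℤ) (s:ℤ) else 0) := by
    intro j _
    rw [hval j]
    rcases eq_or_ne j (s-1) with h1 | h1
    · subst h1
      simp only [if_pos rfl, if_neg hne, if_true]
      ring
    · rcases eq_or_ne j s with h2 | h2
      · subst h2
        simp only [if_neg (Ne.symm hne), if_pos rfl, if_true]
        ring
      · simp only [if_neg h1, if_neg h2]
        ring
  rw [Finset.sum_congr rfl key, Finset.sum_sub_distrib, Finset.sum_add_distrib]
  have h1 : s - 1 ∈ S := by simp [hS]
  have h2 : s ∈ S := by simp [hS]
  rw [Finset.sum_ite_eq' S (s-1) (fun _ => min (i:ℤ) ((s-1:ℕ):ℤ)),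
    Finset.sum_ite_eq' S s (fun _ => min (i:ℤ) (s:ℤ)), if_pos h1, if_pos h2]

/-- Lemma 4.2 of the paper: under the box-removal
`m̃_i^{(a)} = m_i^{(a)} − δ_{i,η_a} + δ_{i,η_a−1}` for `k ≤ a ≤ l`
(with `η_{a-1} ≥ η_a ≥ η_{a+1}`, and the stable conventions
`m^{(l+1)} = m^{(l)}`, `η_{l+1} = η_l`), for every `k ≤ a ≤ l`:
`p_{η_a}^{(a)} − p̃_{η_a−1}^{(a)} = Σ_{i≥η_a} L_i^{(a)} + Σ_{i≥η_a} m_i^{(a-1)}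
  − 2Σ_{i≥η_a} m_i^{(a)} + Σ_{i≥η_a} m_i^{(a+1)} + 1 − δ_{η_a,η_{a+1}}`. -/
theorem stmt12 (k l : ℕ) (hk : 1 ≤ k) (hkl : k ≤ l)
    (L m : ℕ → ℕ →₀ ℕ) (hm0 : m 0 = 0)
    (η : ℕ → ℕ)
    (hη1 : ∀ a, k ≤ a → a ≤ l → 1 ≤ η a)
    (hηmono : ∀ a, k ≤ a → a < l → η (a + 1) ≤ η a)
    (hrow : ∀ a, k ≤ a → a ≤ l → 1 ≤ (m a) (η a))
    (hstabm : m (l + 1) = m l) (hstabη : η (l + 1) = η l)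
    (m' : ℕ → ℕ →₀ ℕ)
    (hm' : ∀ a, m' a = if k ≤ a ∧ a ≤ l
        then m a + Finsupp.single (η a - 1) 1 - Finsupp.single (η a) 1
        else m a) :
    ∀ a, k ≤ a → a ≤ l →
      vacancyA l L m a (η a) - vacancyA l L m' a (η a - 1)
        = (tailSum (L a) (η a) : ℤ) + (tailSum (m (a - 1)) (η a) : ℤ)
          - 2 * (tailSum (m a) (η a) : ℤ) + (tailSum (m (a + 1)) (η a) : ℤ)
          + 1 - (if η a = η (a + 1) then 1 else 0) := by
  intro a hka hal
  have hi1 : 1 ≤ η a := hη1 a hka hal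
  have hma : QfunZ (m' a) (η a - 1) = QfunZ (m a) (η a - 1) := by
    rw [hm' a, if_pos ⟨hka, hal⟩, QfunZ_shift _ _ hi1 (hrow a hka hal)]
    have e1 : min ((η a - 1 : ℕ) : ℤ) ((η a - 1 : ℕ) : ℤ) = ((η a - 1 : ℕ) : ℤ) := min_self _
    have e2 : min ((η a - 1 : ℕ) : ℤ) ((η a : ℕ) : ℤ) = ((η a - 1 : ℕ) : ℤ) := by
      apply min_eq_left; omega
    rw [e1, e2]; ring
  have hmprev : QfunZ (m' (a-1)) (η a - 1) = QfunZ (m (a-1)) (η a - 1) := by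
    rcases eq_or_lt_of_le hka with heq | hlt
    · rw [hm' (a-1), if_neg (by omega)]
    · have h1 : k ≤ a - 1 := by omega
      have h2 : a - 1 ≤ l := by omega
      have hge : η a ≤ η (a-1) := by
        have := hηmono (a-1) h1 (by omega)
        rwa [Nat.sub_add_cancel (by omega : 1 ≤ a)] at this
      rw [hm' (a-1), if_pos ⟨h1, h2⟩, QfunZ_shift _ _ (hη1 _ h1 h2) (hrow _ h1 h2)]
      have e1 : min ((η a - 1 : ℕ) : ℤ) ((η (a-1) - 1 : ℕ) : ℤ) = ((η a - 1 : ℕ) : ℤ) := by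
        apply min_eq_left; omega
      have e2 : min ((η a - 1 : ℕ) : ℤ) ((η (a-1) : ℕ) : ℤ) = ((η a - 1 : ℕ) : ℤ) := by
        apply min_eq_left; omega
      rw [e1, e2]; ring
  have hmnext : ∀ _ : a < l, QfunZ (m' (a+1)) (η a - 1)
      = QfunZ (m (a+1)) (η a - 1) + (if η a = η (a+1) then 0 else -1) := by
    intro hal'
    have h1 : k ≤ a + 1 := by omega
    have h2 : a + 1 ≤ l := by omega
    have hle : η (a+1) ≤ η a := hηmono a hka hal'
    have he1 : 1 ≤ η (a+1) := hη1 _ h1 h2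
    rw [hm' (a+1), if_pos ⟨h1, h2⟩, QfunZ_shift _ _ he1 (hrow _ h1 h2)]
    by_cases hd : η a = η (a+1)
    · rw [if_pos hd, ← hd]
      have e1 : min ((η a - 1 : ℕ) : ℤ) ((η a - 1 : ℕ) : ℤ) = ((η a - 1:ℕ):ℤ) := min_self _
      have e2 : min ((η a - 1 : ℕ) : ℤ) ((η a : ℕ) : ℤ) = ((η a - 1:ℕ):ℤ) := by
        apply min_eq_left; omega
      rw [e1, e2]; ring
    · rw [if_neg hd]
      have hlt' : η (a+1) < η a := lt_of_le_of_ne hle (fun h => hd h.symm)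
      have e1 : min ((η a - 1 : ℕ) : ℤ) ((η (a+1) - 1 : ℕ) : ℤ) = ((η (a+1) - 1:ℕ):ℤ) := by
        apply min_eq_right; omega
      have e2 : min ((η a - 1 : ℕ) : ℤ) ((η (a+1) : ℕ) : ℤ) = ((η (a+1):ℕ):ℤ) := by
        apply min_eq_right; omega
      rw [e1, e2]
      omega
  by_cases hl : a = l
  · subst hl
    have hLd := sum_mul_min_sub (L a) (η a) hi1
    have hQ1 := QfunZ_sub (m (a-1)) (η a) hi1
    have hQ2 := QfunZ_sub (m a) (η a) hi1
    simp only [vacancyA, eq_self_iff_true, if_true, if_pos rfl]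
    rw [hma, hmprev, hstabm, hstabη, if_pos rfl]
    linarith
  · have hal' : a < l := lt_of_le_of_ne hal hl
    have hLd := sum_mul_min_sub (L a) (η a) hi1
    have hQ1 := QfunZ_sub (m (a-1)) (η a) hi1
    have hQ2 := QfunZ_sub (m a) (η a) hi1
    have hQ3 := QfunZ_sub (m (a+1)) (η a) hi1
    simp only [vacancyA, if_neg hl]
    rw [hma, hmprev, hmnext hal']
    by_cases hd : η a = η (a+1)
    · rw [if_pos hd, if_pos hd]
      linarith
    · rw [if_neg hd, if_neg hd]
      linarith
end

section
/- Combining the charge-difference and vacancy-difference identities: if the rigging of the shortened row in color a is set to the new vacancy number p̃_{η_a−1}^{(a)} (while before removal it equaled p_{η_a}^{(a)}), then the total statistic c(ν,J) = c(ν) + Σ|J| changes by exactly −1/2·γ under one application of δ; i.e. c(ν,J) − c(ν̃,J̃) = −γ/2. -/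
open Finset

/-! The map `δ` turns, in each colour `a`, a row of length `u a` into one of length `v a`.
The charge is a quadratic form in the multiplicities whose linear part is minus the vacancy
numbers, so its change is a sum of vacancy-number differences plus half the Cartan form on the
moved boxes; the vacancy numbers change by the Cartan matrix applied to the moved boxes.  With
`u = η`, `v = η - 1` and the symmetry of `C`, everything cancels except
`½ Σ_{a,b ∈ [k,l]} C_ab (min(η_a - 1, η_b - 1) - min(η_a, η_b)) = -½ Σ_{a,b ∈ [k,l]} C_ab`,
and the boundary value `C_ll = 1` makes the last sum `1`. -/

/-- `minDiff i u v = Q_i(e_v - e_u)`: the change of `QfunZ · i` when a row of length `u`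
becomes one of length `v`. -/
def minDiff (i u v : ℕ) : ℤ := min i v - min i u

lemma minDiff_self (i u : ℕ) : minDiff i u u = 0 := sub_self _

lemma QfunZ_eq_sum (f : ℕ →₀ ℕ) (i : ℕ) :
    QfunZ f i = f.sum fun j c => (min i j : ℤ) * c :=
  rfl

lemma QfunZ_add (f g : ℕ →₀ ℕ) (i : ℕ) : QfunZ (f + g) i = QfunZ f i + QfunZ g i := by
  simp only [QfunZ_eq_sum]
  rw [Finsupp.sum_add_index'] <;> intros <;> push_cast <;> ring

lemma QfunZ_single_one (j i : ℕ) : QfunZ (Finsupp.single j 1) i = min i j := by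
  simp [QfunZ_eq_sum]

lemma QfunZ_eq_of_add_single_eq {f f' : ℕ →₀ ℕ} {u v : ℕ}
    (h : f' + Finsupp.single u 1 = f + Finsupp.single v 1) (i : ℕ) :
    QfunZ f' i = QfunZ f i + minDiff i u v := by
  have := congrArg (QfunZ · i) h
  simp only [QfunZ_add, QfunZ_single_one] at this
  rw [minDiff]
  linarith

lemma pairQ_eq_sum (f g : ℕ →₀ ℕ) : pairQ f g = f.sum fun j c => (c : ℚ) * QfunZ g j := by
  refine sum_congr rfl fun j _ => ?_
  simp only [QfunZ, Int.cast_sum, Int.cast_mul, Int.cast_natCast, mul_sum]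
  exact sum_congr rfl fun j' _ => by push_cast; ring

lemma pairQ_comm (f g : ℕ →₀ ℕ) : pairQ f g = pairQ g f := by
  rw [pairQ, pairQ, sum_comm]
  exact sum_congr rfl fun _ _ => sum_congr rfl fun _ _ => by rw [min_comm]; ring

lemma pairQ_add_left (f g h : ℕ →₀ ℕ) : pairQ (f + g) h = pairQ f h + pairQ g h := by
  simp only [pairQ_eq_sum]
  rw [Finsupp.sum_add_index'] <;> intros <;> push_cast <;> ring

lemma pairQ_single_one_left (j : ℕ) (g : ℕ →₀ ℕ) :
    pairQ (Finsupp.single j 1) g = QfunZ g j := by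
  simp [pairQ_eq_sum]

lemma pairQ_eq_of_add_single_eq_left {f f' : ℕ →₀ ℕ} {u v : ℕ}
    (h : f' + Finsupp.single u 1 = f + Finsupp.single v 1) (g : ℕ →₀ ℕ) :
    pairQ f' g = pairQ f g + (QfunZ g v - QfunZ g u) := by
  have := congrArg (pairQ · g) h
  simp only [pairQ_add_left, pairQ_single_one_left] at this
  linarith

lemma pairQ_eq_of_add_single_eq_right {g g' : ℕ →₀ ℕ} {s t : ℕ}
    (h : g' + Finsupp.single s 1 = g + Finsupp.single t 1) (f : ℕ →₀ ℕ) :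
    pairQ f g' = pairQ f g + (QfunZ f t - QfunZ f s) := by
  rw [pairQ_comm, pairQ_eq_of_add_single_eq_left h, pairQ_comm]

lemma pairQ_eq_of_add_single_eq {f f' g g' : ℕ →₀ ℕ} {u v s t : ℕ}
    (hf : f' + Finsupp.single u 1 = f + Finsupp.single v 1)
    (hg : g' + Finsupp.single s 1 = g + Finsupp.single t 1) :
    pairQ f' g' = pairQ f g + (QfunZ f t - QfunZ f s) + (QfunZ g v - QfunZ g u)
      + ((minDiff v s t : ℚ) - minDiff u s t) := by
  rw [pairQ_eq_of_add_single_eq_left hf, pairQ_eq_of_add_single_eq_right hg,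
    QfunZ_eq_of_add_single_eq hg, QfunZ_eq_of_add_single_eq hg]
  push_cast
  ring

lemma cartanA_symm (l a b : ℕ) : cartanA l a b = cartanA l b a := by
  unfold cartanA
  split_ifs <;> omega

lemma sum_sum_cartanA_mul_swap {R : Type*} [CommRing R] (l : ℕ) (s : Finset ℕ)
    (f : ℕ → ℕ → R) :
    ∑ a ∈ s, ∑ b ∈ s, (cartanA l a b : R) * f b a
      = ∑ a ∈ s, ∑ b ∈ s, (cartanA l a b : R) * f a b := by
  rw [sum_comm]
  exact sum_congr rfl fun _ _ => sum_congr rfl fun _ _ => by rw [cartanA_symm]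

lemma sum_cartanA_mul {R : Type*} [CommRing R] {k l a : ℕ} (ha : a ∈ Icc k l) (q : ℕ → R) :
    ∑ b ∈ Icc k l, (cartanA l a b : R) * q b
      = (if a = l then 1 else 2) * q a - (if a = k then 0 else q (a - 1))
        - (if a = l then 0 else q (a + 1)) := by
  simp only [cartanA, Int.cast_sub, Int.cast_ite, Int.cast_one, Int.cast_ofNat, Int.cast_zero,
    sub_mul, ite_mul, one_mul, zero_mul, sum_sub_distrib, sum_ite_eq, if_pos ha]
  rw [mem_Icc] at ha
  obtain _ | a := a <;> simp <;> split_ifs <;> first | ring1 | omega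

lemma sum_sum_cartanA {k l : ℕ} (hkl : k ≤ l) :
    ∑ a ∈ Icc k l, ∑ b ∈ Icc k l, (cartanA l a b : ℚ) = 1 := by
  have hrow : ∀ a ∈ Icc k l, ∑ b ∈ Icc k l, (cartanA l a b : ℚ) = if a = k then 1 else 0 := by
    intro a ha
    have := sum_cartanA_mul ha fun _ => (1 : ℚ)
    simp only [mul_one] at this
    rw [this]
    split_ifs <;> norm_num
  rw [sum_congr rfl hrow, sum_ite_eq', if_pos (by simpa using hkl)]

lemma sum_sum_cartanA_mul_of_add_swap_eq {k l : ℕ} (hkl : k ≤ l) (f : ℕ → ℕ → ℚ) (c : ℚ)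
    (hf : ∀ a ∈ Icc k l, ∀ b ∈ Icc k l, f a b + f b a = c) :
    ∑ a ∈ Icc k l, ∑ b ∈ Icc k l, (cartanA l a b : ℚ) * f a b = c / 2 := by
  have h2 : 2 * ∑ a ∈ Icc k l, ∑ b ∈ Icc k l, (cartanA l a b : ℚ) * f a b
      = c * ∑ a ∈ Icc k l, ∑ b ∈ Icc k l, (cartanA l a b : ℚ) := by
    conv_lhs => rw [two_mul]; arg 1; rw [← sum_sum_cartanA_mul_swap]
    simp only [← sum_add_distrib, mul_sum]
    exact sum_congr rfl fun a ha => sum_congr rfl fun b hb => by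
      rw [← mul_add, add_comm, hf a ha b hb, mul_comm]
  rw [sum_sum_cartanA hkl] at h2
  linarith

section Moves

variable {k l : ℕ} {L m m' : ℕ → ℕ →₀ ℕ} {u v : ℕ → ℕ}

lemma vacancyA_eq_sub_sum_cartanA (hm0 : m 0 = 0) {a : ℕ} (ha : a ∈ Icc 1 l) (i : ℕ) :
    vacancyA l L m a i = QfunZ (L a) i - ∑ b ∈ Icc 1 l, cartanA l a b * QfunZ (m b) i := by
  have hrow := sum_cartanA_mul ha fun b => QfunZ (m b) i
  simp only [Int.cast_id] at hrow
  rw [hrow]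
  have hL : ((L a).support.sum fun j => ((L a) j : ℤ) * (min i j : ℤ)) = QfunZ (L a) i :=
    sum_congr rfl fun j _ => mul_comm _ _
  have hprev : (if a = 1 then 0 else QfunZ (m (a - 1)) i) = QfunZ (m (a - 1)) i := by
    split_ifs with h
    · simp [h, hm0, QfunZ]
    · rfl
  rw [vacancyA, hL, hprev]
  split_ifs <;> ring

lemma vacancyA_eq_of_add_single_eq (hm0 : m 0 = 0) (hm'0 : m' 0 = 0)
    (hmove : ∀ a, m' a + Finsupp.single (u a) 1 = m a + Finsupp.single (v a) 1)
    {a : ℕ} (ha : a ∈ Icc 1 l) (i : ℕ) :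
    vacancyA l L m' a i
      = vacancyA l L m a i - ∑ b ∈ Icc 1 l, cartanA l a b * minDiff i (u b) (v b) := by
  simp only [vacancyA_eq_sub_sum_cartanA hm0 ha, vacancyA_eq_sub_sum_cartanA hm'0 ha,
    QfunZ_eq_of_add_single_eq (hmove _), mul_add, sum_add_distrib]
  ring

lemma chargeA_eq_of_add_single_eq (hm0 : m 0 = 0)
    (hmove : ∀ a, m' a + Finsupp.single (u a) 1 = m a + Finsupp.single (v a) 1) :
    chargeA l L m' = chargeA l L m
      + ∑ a ∈ Icc 1 l, ((vacancyA l L m a (u a) : ℚ) - vacancyA l L m a (v a))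
      + 1 / 2 * ∑ a ∈ Icc 1 l, ∑ b ∈ Icc 1 l,
          (cartanA l a b : ℚ) * ((minDiff (v a) (u b) (v b) : ℚ) - minDiff (u a) (u b) (v b)) := by
  have hrow : ∀ a ∈ Icc 1 l, ∀ i, ∑ b ∈ Icc 1 l, (cartanA l a b : ℚ) * QfunZ (m b) i
      = QfunZ (L a) i - vacancyA l L m a i := by
    intro a ha i
    rw [vacancyA_eq_sub_sum_cartanA hm0 ha]
    push_cast
    ring
  have hlin : ∑ a ∈ Icc 1 l, ∑ b ∈ Icc 1 l,
        (cartanA l a b : ℚ) * ((QfunZ (m b) (v a) : ℚ) - QfunZ (m b) (u a))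
      = ∑ a ∈ Icc 1 l, (((QfunZ (L a) (v a) : ℚ) - QfunZ (L a) (u a))
          - ((vacancyA l L m a (v a) : ℚ) - vacancyA l L m a (u a))) := by
    refine sum_congr rfl fun a ha => ?_
    simp only [mul_sub, sum_sub_distrib, hrow a ha]
    ring
  have hlin' := (sum_sum_cartanA_mul_swap l (Icc 1 l)
    fun a b => (QfunZ (m a) (v b) : ℚ) - QfunZ (m a) (u b)).symm.trans hlin
  simp only [chargeA, pairQ_eq_of_add_single_eq (hmove _) (hmove _),
    pairQ_eq_of_add_single_eq_right (hmove _), mul_add, sum_add_distrib, hlin, hlin',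
    sum_sub_distrib]
  ring

lemma sum_sum_eq_of_subset {R : Type*} [AddCommMonoid R] {s t : Finset ℕ} (hst : s ⊆ t)
    (f : ℕ → ℕ → R) (hf : ∀ a b, a ∉ s ∨ b ∉ s → f a b = 0) :
    ∑ a ∈ t, ∑ b ∈ t, f a b = ∑ a ∈ s, ∑ b ∈ s, f a b := by
  rw [← sum_subset hst fun a _ ha => sum_eq_zero fun b _ => hf a b (.inl ha)]
  exact sum_congr rfl fun a _ => (sum_subset hst fun b _ hb => hf a b (.inr hb)).symm

lemma chargeA_sub_add_sum_vacancyA_sub_sum_vacancyA (hk : 1 ≤ k) (hm0 : m 0 = 0)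
    (hmove : ∀ a, m' a + Finsupp.single (u a) 1 = m a + Finsupp.single (v a) 1)
    (hfix : ∀ a ∉ Icc k l, u a = v a) :
    chargeA l L m - chargeA l L m' + ∑ a ∈ Icc k l, (vacancyA l L m a (u a) : ℚ)
      - ∑ a ∈ Icc k l, (vacancyA l L m' a (v a) : ℚ)
      = 1 / 2 * ∑ a ∈ Icc k l, ∑ b ∈ Icc k l,
          (cartanA l a b : ℚ) * ((minDiff (v a) (u b) (v b) : ℚ) + minDiff (u a) (u b) (v b)) := by
  have hK : Icc k l ⊆ Icc 1 l := Icc_subset_Icc hk le_rfl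
  have h0 : (0 : ℕ) ∉ Icc k l := by simp only [mem_Icc]; omega
  have hm'0 : m' 0 = 0 := by simpa [hfix 0 h0, hm0] using hmove 0
  have hvac_restrict : ∑ a ∈ Icc 1 l, ((vacancyA l L m a (u a) : ℚ) - vacancyA l L m a (v a))
      = ∑ a ∈ Icc k l, ((vacancyA l L m a (u a) : ℚ) - vacancyA l L m a (v a)) :=
    (sum_subset hK fun a _ ha => by rw [hfix a ha, sub_self]).symm
  have hpair_restrict : ∑ a ∈ Icc 1 l, ∑ b ∈ Icc 1 l,
        (cartanA l a b : ℚ) * ((minDiff (v a) (u b) (v b) : ℚ) - minDiff (u a) (u b) (v b))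
      = ∑ a ∈ Icc k l, ∑ b ∈ Icc k l,
        (cartanA l a b : ℚ) * ((minDiff (v a) (u b) (v b) : ℚ) - minDiff (u a) (u b) (v b)) :=
    sum_sum_eq_of_subset hK _ fun a b hab => by
      rcases hab with ha | hb
      · rw [hfix a ha, sub_self, mul_zero]
      · rw [hfix b hb, minDiff_self, minDiff_self, sub_self, mul_zero]
  have hcorr_restrict : ∀ a ∈ Icc k l,
      ∑ b ∈ Icc 1 l, (cartanA l a b : ℚ) * minDiff (v a) (u b) (v b)
        = ∑ b ∈ Icc k l, (cartanA l a b : ℚ) * minDiff (v a) (u b) (v b) := fun a _ =>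
    (sum_subset hK fun b _ hb => by rw [hfix b hb, minDiff_self, Int.cast_zero, mul_zero]).symm
  rw [chargeA_eq_of_add_single_eq hm0 hmove, hvac_restrict, hpair_restrict,
    sum_congr rfl fun a ha => congrArg (Int.cast : ℤ → ℚ)
      (vacancyA_eq_of_add_single_eq hm0 hm'0 hmove (hK ha) (v a))]
  push_cast
  simp only [sum_congr rfl hcorr_restrict, sum_sub_distrib, mul_add, mul_sub, sum_add_distrib]
  ring

end Moves

lemma minDiff_pred_add_swap {x y : ℕ} (hx : 1 ≤ x) (hy : 1 ≤ y) :
    (minDiff (x - 1) y (y - 1) + minDiff x y (y - 1))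
      + (minDiff (y - 1) x (x - 1) + minDiff y x (x - 1)) = -2 := by
  simp only [minDiff]
  omega

/-- `Jtot` and `J'tot` stand for `Σ|J|` and `Σ|J̃|`: each removed row was singular (rigging
`p_{η_a}^{(a)}`) and each shortened row gets rigging `p̃_{η_a-1}^{(a)}`. -/
theorem stmt13_general (k l : ℕ) (hk : 1 ≤ k) (hkl : k ≤ l)
    (L m : ℕ → ℕ →₀ ℕ) (hm0 : m 0 = 0)
    (η : ℕ → ℕ)
    (hη1 : ∀ a, k ≤ a → a ≤ l → 1 ≤ η a)
    (hrow : ∀ a, k ≤ a → a ≤ l → 1 ≤ (m a) (η a))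
    (m' : ℕ → ℕ →₀ ℕ)
    (hm' : ∀ a, m' a = if k ≤ a ∧ a ≤ l
        then m a + Finsupp.single (η a - 1) 1 - Finsupp.single (η a) 1
        else m a)
    (γ : ℚ)
    (Jtot J'tot : ℚ)
    (hJ : J'tot = Jtot - ((Icc k l).sum fun a => ((vacancyA l L m a (η a) : ℚ)))
        + (Icc k l).sum fun a => ((vacancyA l L m' a (η a - 1) : ℚ))) :
    (γ * chargeA l L m + γ * Jtot) - (γ * chargeA l L m' + γ * J'tot)
      = -γ / 2 := by
  obtain ⟨v, hv, hfix⟩ :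
      ∃ v : ℕ → ℕ, (∀ a ∈ Icc k l, v a = η a - 1) ∧ ∀ a ∉ Icc k l, η a = v a :=
    ⟨fun a => if a ∈ Icc k l then η a - 1 else η a, fun a ha => if_pos ha,
      fun a ha => (if_neg ha).symm⟩
  have hmove : ∀ a, m' a + Finsupp.single (η a) 1 = m a + Finsupp.single (v a) 1 := by
    intro a
    by_cases ha : a ∈ Icc k l
    · obtain ⟨hka, hal⟩ := mem_Icc.mp ha
      rw [hm' a, if_pos ⟨hka, hal⟩, hv a ha]
      exact tsub_add_cancel_of_le (Finsupp.single_le_iff.mpr (le_add_right (hrow a hka hal)))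
    · rw [hm' a, if_neg (mem_Icc.not.mp ha), hfix a ha]
  have hE := sum_sum_cartanA_mul_of_add_swap_eq hkl
    (fun a b => (minDiff (v a) (η b) (v b) : ℚ) + minDiff (η a) (η b) (v b)) (-2)
    fun a ha b hb => by
      simp only [hv a ha, hv b hb]
      rw [mem_Icc] at ha hb
      exact_mod_cast minDiff_pred_add_swap (hη1 a ha.1 ha.2) (hη1 b hb.1 hb.2)
  have hshort : ∑ a ∈ Icc k l, (vacancyA l L m' a (v a) : ℚ)
      = ∑ a ∈ Icc k l, (vacancyA l L m' a (η a - 1) : ℚ) :=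
    sum_congr rfl fun a ha => by rw [hv a ha]
  rw [hJ]
  linear_combination γ * chargeA_sub_add_sum_vacancyA_sub_sum_vacancyA hk hm0 hmove hfix
    + γ / 2 * hE + γ * hshort

/-- Proposition 4.3 of the paper: the statistic `c(ν,J) = γ·c(ν) + γ·Σ|J|`
decreases by exactly `γ/2` under one application of `δ`.  Here before removal
the rigging of each removed row equals the vacancy number `p_{η_a}^{(a)}`
(singular row), and after removal the rigging of the shortened row is set to
the new vacancy number `p̃_{η_a−1}^{(a)}`, all other riggings being kept, so
`Σ|J̃| = Σ|J| − Σ_a p_{η_a}^{(a)} + Σ_a p̃_{η_a−1}^{(a)}`. -/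
theorem stmt13 (k l : ℕ) (hk : 1 ≤ k) (hkl : k ≤ l)
    (L m : ℕ → ℕ →₀ ℕ) (hm0 : m 0 = 0)
    (η : ℕ → ℕ)
    (hη1 : ∀ a, k ≤ a → a ≤ l → 1 ≤ η a)
    (hηmono : ∀ a, k ≤ a → a < l → η (a + 1) ≤ η a)
    (hrow : ∀ a, k ≤ a → a ≤ l → 1 ≤ (m a) (η a))
    (hstabm : m (l + 1) = m l) (hstabη : η (l + 1) = η l)
    (m' : ℕ → ℕ →₀ ℕ)
    (hm' : ∀ a, m' a = if k ≤ a ∧ a ≤ l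
        then m a + Finsupp.single (η a - 1) 1 - Finsupp.single (η a) 1
        else m a)
    (γ : ℚ) (hγ : 0 < γ)
    (Jtot J'tot : ℚ)
    (hJ : J'tot = Jtot - ((Icc k l).sum fun a => ((vacancyA l L m a (η a) : ℚ)))
        + (Icc k l).sum fun a => ((vacancyA l L m' a (η a - 1) : ℚ))) :
    (γ * chargeA l L m + γ * Jtot) - (γ * chargeA l L m' + γ * J'tot)
      = -γ / 2 :=
  stmt13_general k l hk hkl L m hm0 η hη1 hrow m' hm' γ Jtot J'tot hJ
end

section
/- Let T be a semistandard skew tableau of shape η/λ with weight μ = (μ_1 ≥ μ_2 ≥ ⋯) whose reverse row word is Yamanouchi. Group the entries of T as follows: repeatedly extract, for each i = 1, …, h (h the largest entry present), the rightmost remaining occurrence of i. Then in each extracted group, the letter i+1 lies in a strictly lower row of T than the letter i, and the groups have weakly decreasing cardinalities h_1 ≥ h_2 ≥ ⋯ equal to the conjugate of μ (the group sizes are the column heights of μ). -/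
open scoped BigOperators

/-- A partition, encoded as a weakly decreasing finitely supported sequence. -/
def IsPartition (f : ℕ → ℕ) : Prop :=
  (∀ i j, i ≤ j → f j ≤ f i) ∧ ∃ N, ∀ i, N ≤ i → f i = 0

/-- The cell `(i,j)` belongs to the skew shape `eta/lam`. -/
def InSkew (lam eta : ℕ → ℕ) (p : ℕ × ℕ) : Prop := lam p.1 ≤ p.2 ∧ p.2 < eta p.1

/-- Semistandard skew tableau of shape `eta/lam`. -/
def IsSkewSSYT (lam eta : ℕ → ℕ) (T : ℕ → ℕ → ℕ) : Prop :=
  (∀ i j, lam i ≤ j → j < eta i → 1 ≤ T i j) ∧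
  (∀ i j, lam i ≤ j → j + 1 < eta i → T i j ≤ T i (j + 1)) ∧
  (∀ i j, lam i ≤ j → lam (i + 1) ≤ j → j < eta (i + 1) → T i j < T (i + 1) j) ∧
  (∀ i j, ¬ (lam i ≤ j ∧ j < eta i) → T i j = 0)

/-- Number of entries of `T` equal to `c`. -/
noncomputable def entryCount (lam eta : ℕ → ℕ) (T : ℕ → ℕ → ℕ) (c : ℕ) : ℕ :=
  Nat.card {p : ℕ × ℕ | InSkew lam eta p ∧ T p.1 p.2 = c}

/-- Reverse row reading word (rows top to bottom, right to left). -/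
def rowWord (lam eta : ℕ → ℕ) (T : ℕ → ℕ → ℕ) (R : ℕ) : List ℕ :=
  (List.range R).flatMap fun i => (((List.range (eta i)).drop (lam i)).reverse).map (T i)

/-- LR skew tableau of shape `eta/lam` and weight `mu`. -/
def IsLRTableau (lam eta mu : ℕ → ℕ) (T : ℕ → ℕ → ℕ) : Prop :=
  IsSkewSSYT lam eta T ∧
  (∀ i : ℕ, entryCount lam eta T (i + 1) = mu i) ∧
  (∀ R : ℕ, (∀ i, R ≤ i → eta i = 0) → IsYamanouchi (rowWord lam eta T R))

/-- Number of occurrences of the letter `c` in `T`. -/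
noncomputable def occCount (lam eta : ℕ → ℕ) (T : ℕ → ℕ → ℕ) (c : ℕ) : ℕ :=
  Nat.card {p : ℕ × ℕ | InSkew lam eta p ∧ T p.1 p.2 = c}

/-- The rank of the occurrence `p` of the letter `c` among all occurrences of
`c`, counted from the right: the number of occurrences of `c` in columns
strictly to the right of `p`.  (In a semistandard tableau all occurrences of a
fixed letter lie in distinct columns, so an occurrence of rank `j-1` is the
`j`-th rightmost and belongs to the `j`-th extracted group.) -/
noncomputable def occRank (lam eta : ℕ → ℕ) (T : ℕ → ℕ → ℕ) (c : ℕ) (p : ℕ × ℕ) : ℕ :=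
  Nat.card {q : ℕ × ℕ | InSkew lam eta q ∧ T q.1 q.2 = c ∧ p.2 < q.2}

/-!
Fix a letter `c ≥ 1` and let `q` be the occurrence of `c + 1` with exactly `r` occurrences of
`c + 1` to its right. In a semistandard tableau equal letters form a horizontal strip, so the
prefix of the reverse row word ending at `q` contains `q` and these `r` occurrences. If the
occurrence `p` of `c` with `r` occurrences of `c` to its right were in a row weakly below `q`,
every `c` in that prefix would lie in a row strictly above `p`, hence to the right of `p`: the
prefix would contain at most `r` letters `c`, against the lattice condition. The `j`-th group
consists of the letters occurring at least `j` times, so its size is `#{c | j ≤ μ_c}`, the `j`-th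
column height of `μ`.
-/

section Semistandard

variable {lam eta : ℕ → ℕ} {T : ℕ → ℕ → ℕ}

theorem IsSkewSSYT.lt_of_row_lt (hS : IsSkewSSYT lam eta T) (hlam : Antitone lam)
    (heta : Antitone eta) {i i' j : ℕ} (hi : i < i') (hj : lam i ≤ j) (hj' : j < eta i') :
    T i j < T i' j := by
  induction i', hi using Nat.le_induction with
  | base => exact hS.2.2.1 i j hj ((hlam i.le_succ).trans hj) hj'
  | succ k hik ih =>
    exact (ih (hj'.trans_le (heta k.le_succ))).trans
      (hS.2.2.1 k j ((hlam (by omega)).trans hj) ((hlam (by omega)).trans hj) hj')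

theorem IsSkewSSYT.le_of_col_le (hS : IsSkewSSYT lam eta T) {i j j' : ℕ} (hj : lam i ≤ j)
    (hjj' : j ≤ j') (hj' : j' < eta i) : T i j ≤ T i j' := by
  induction j', hjj' using Nat.le_induction with
  | base => exact le_rfl
  | succ k hjk ih => exact (ih (by omega)).trans (hS.2.1 i k (hj.trans hjk) hj')

theorem IsSkewSSYT.fst_le_of_snd_lt (hS : IsSkewSSYT lam eta T) (hlam : Antitone lam)
    (heta : Antitone eta) {p q : ℕ × ℕ} (hp : InSkew lam eta p) (hq : InSkew lam eta q)
    (hpq : T p.1 p.2 = T q.1 q.2) (hlt : p.2 < q.2) : q.1 ≤ p.1 := by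
  by_contra! h
  have hcol := hS.lt_of_row_lt hlam heta h hp.1 (hlt.trans hq.2)
  have hrow := hS.le_of_col_le ((hlam h.le).trans hp.1) hlt.le hq.2
  exact (hcol.trans_le hrow).ne hpq

theorem IsSkewSSYT.eq_of_snd_eq (hS : IsSkewSSYT lam eta T) (hlam : Antitone lam)
    (heta : Antitone eta) {p q : ℕ × ℕ} (hp : InSkew lam eta p) (hq : InSkew lam eta q)
    (hpq : T p.1 p.2 = T q.1 q.2) (h : p.2 = q.2) : p = q := by
  obtain ⟨i, j⟩ := p
  obtain ⟨i', j'⟩ := q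
  obtain rfl : j = j' := h
  rcases lt_trichotomy i i' with hlt | rfl | hlt
  · exact absurd hpq (hS.lt_of_row_lt hlam heta hlt hp.1 hq.2).ne
  · rfl
  · exact absurd hpq (hS.lt_of_row_lt hlam heta hlt hq.1 hp.2).ne'

end Semistandard

theorem IsPartition.finite_setOf_inSkew {eta : ℕ → ℕ} (heta : IsPartition eta)
    (lam : ℕ → ℕ) : {x : ℕ × ℕ | InSkew lam eta x}.Finite := by
  obtain ⟨N, hN⟩ := heta.2
  refine ((Set.finite_Iio N).prod (Set.finite_Iio (eta 0))).subset fun x hx => ?_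
  have hrow : x.1 < N := by
    by_contra! h
    have := hx.2
    rw [hN _ h] at this
    omega
  exact ⟨hrow, hx.2.trans_le (heta.1 0 x.1 (Nat.zero_le _))⟩

theorem IsPartition.finite_setOf_le {mu : ℕ → ℕ} (hmu : IsPartition mu) {j : ℕ}
    (hj : 1 ≤ j) : {i | j ≤ mu i}.Finite := by
  obtain ⟨N, hN⟩ := hmu.2
  refine (Set.finite_Iio N).subset fun i (hi : j ≤ mu i) => Set.mem_Iio.2 ?_
  by_contra! h
  have := hN i h
  omega

theorem IsPartition.card_setOf_succ_le_le {mu : ℕ → ℕ} (hmu : IsPartition mu) {j : ℕ}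
    (hj : 1 ≤ j) : Nat.card {i | j + 1 ≤ mu i} ≤ Nat.card {i | j ≤ mu i} :=
  Nat.card_mono (hmu.finite_setOf_le hj) fun i (hi : j + 1 ≤ mu i) => (j.le_succ.trans hi :)

theorem List.count_map_eq_ncard {α β : Type*} [DecidableEq α] [BEq β] [LawfulBEq β]
    {l : List α} (hl : l.Nodup) (f : α → β) (b : β) :
    (l.map f).count b = {a | a ∈ l ∧ f a = b}.ncard := by
  rw [count_eq_countP, countP_map, countP_eq_length_filter,
    ← toFinset_card_of_nodup (hl.filter _), ← Set.ncard_coe_finset]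
  congr 1
  ext a
  simp

theorem IsYamanouchi.count_le_of_prefix {w u : List ℕ} (hw : IsYamanouchi w) (hu : u <+: w)
    (i : ℕ) : u.count (i + 2) ≤ u.count (i + 1) := by
  rw [List.prefix_iff_eq_take.1 hu]
  exact hw _ i

section ReadingWord

variable {lam eta : ℕ → ℕ}

def rowCells (eta : ℕ → ℕ) (i s : ℕ) : List (ℕ × ℕ) :=
  ((List.range (eta i)).drop s).reverse.map (i, ·)

def readingCells (lam eta : ℕ → ℕ) (R : ℕ) : List (ℕ × ℕ) :=
  (List.range R).flatMap fun i => rowCells eta i (lam i)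

theorem rowWord_eq_map_readingCells (T : ℕ → ℕ → ℕ) (R : ℕ) :
    rowWord lam eta T R = (readingCells lam eta R).map fun x => T x.1 x.2 := by
  simp [rowWord, readingCells, rowCells, List.map_flatMap, List.map_reverse, Function.comp_def]

theorem mem_rowCells {i s : ℕ} {x : ℕ × ℕ} :
    x ∈ rowCells eta i s ↔ x.1 = i ∧ s ≤ x.2 ∧ x.2 < eta i := by
  obtain ⟨x1, x2⟩ := x
  simp only [rowCells, List.mem_map, List.mem_reverse, List.range_eq_range', List.drop_range',
    List.mem_range'_1, Prod.mk.injEq]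
  constructor
  · rintro ⟨j, hj, rfl, rfl⟩
    omega
  · rintro ⟨rfl, h⟩
    exact ⟨x2, by omega, rfl, rfl⟩

theorem mem_readingCells {R : ℕ} {x : ℕ × ℕ} :
    x ∈ readingCells lam eta R ↔ x.1 < R ∧ InSkew lam eta x := by
  simp only [readingCells, List.mem_flatMap, List.mem_range, mem_rowCells, InSkew]
  constructor
  · rintro ⟨i, hi, rfl, h⟩
    exact ⟨hi, h⟩
  · rintro ⟨hi, h⟩
    exact ⟨x.1, hi, rfl, h⟩

theorem nodup_rowCells (i s : ℕ) : (rowCells eta i s).Nodup :=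
  (List.nodup_reverse.2 (List.nodup_range.sublist (List.drop_sublist _ _))).map
    (Prod.mk_right_injective i)

theorem nodup_readingCells (R : ℕ) : (readingCells lam eta R).Nodup := by
  refine List.nodup_flatMap.2 ⟨fun i _ => nodup_rowCells i (lam i), ?_⟩
  refine List.nodup_range.pairwise_of_forall_ne fun i _ i' _ hii' x hx hx' => hii' ?_
  rw [mem_rowCells] at hx hx'
  exact hx.1.symm.trans hx'.1

theorem rowCells_prefix {i s t : ℕ} (hst : s ≤ t) : rowCells eta i t <+: rowCells eta i s := by
  refine List.IsPrefix.map _ (List.IsSuffix.reverse ?_)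
  rw [show t = s + (t - s) by omega, ← List.drop_drop]
  exact List.drop_suffix _ _

theorem readingCells_append_rowCells_prefix {R a b : ℕ} (ha : a < R) (hb : lam a ≤ b) :
    readingCells lam eta a ++ rowCells eta a b <+: readingCells lam eta R := by
  have hsucc : readingCells lam eta (a + 1)
      = readingCells lam eta a ++ rowCells eta a (lam a) := by
    simp [readingCells, List.range_succ, List.flatMap_append]
  have hR : readingCells lam eta (a + 1) <+: readingCells lam eta R := by
    refine List.IsPrefix.flatMap ?_ _
    have := List.take_prefix (a + 1) (List.range R)
    rwa [List.take_range, min_eq_left (by omega)] at this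
  rw [hsucc] at hR
  exact ((List.prefix_append_right_inj _).2 (rowCells_prefix hb)).trans hR

end ReadingWord

section LRTableau

variable {lam eta mu : ℕ → ℕ} {T : ℕ → ℕ → ℕ}

/-- Occurrences of `v` that the reverse row word reads no later than the cell `(a, b)`. -/
def cellsReadBefore (lam eta : ℕ → ℕ) (T : ℕ → ℕ → ℕ) (a b v : ℕ) :
    Set (ℕ × ℕ) :=
  {x | InSkew lam eta x ∧ (x.1 < a ∨ x.1 = a ∧ b ≤ x.2) ∧ T x.1 x.2 = v}

theorem IsLRTableau.ncard_cellsReadBefore_succ_le (hT : IsLRTableau lam eta mu T)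
    (heta : IsPartition eta) {a b c : ℕ} (hc : 1 ≤ c) (hab : InSkew lam eta (a, b)) :
    (cellsReadBefore lam eta T a b (c + 1)).ncard ≤ (cellsReadBefore lam eta T a b c).ncard := by
  obtain ⟨N, hN⟩ := heta.2
  have ha : a < N := by
    by_contra! h
    have := hab.2
    rw [hN a h] at this
    omega
  set cells := readingCells lam eta a ++ rowCells eta a b
  have hnodup : cells.Nodup := by
    refine List.nodup_append.2 ⟨nodup_readingCells a, nodup_rowCells a b, fun x hx y hy => ?_⟩
    rw [mem_readingCells] at hx
    rw [mem_rowCells] at hy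
    rintro rfl
    omega
  have hcount (v : ℕ) :
      (cells.map fun x => T x.1 x.2).count v = (cellsReadBefore lam eta T a b v).ncard := by
    rw [List.count_map_eq_ncard hnodup]
    congr 1
    ext ⟨x, y⟩
    simp only [cellsReadBefore, cells, List.mem_append, mem_readingCells, mem_rowCells,
      Set.mem_ofPred_eq]
    constructor
    · rintro ⟨⟨hx, hskew⟩ | ⟨rfl, hby, hy⟩, hv⟩
      · exact ⟨hskew, Or.inl hx, hv⟩
      · exact ⟨⟨hab.1.trans hby, hy⟩, Or.inr ⟨rfl, hby⟩, hv⟩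
    · rintro ⟨hskew, hx | ⟨rfl, hby⟩, hv⟩
      · exact ⟨Or.inl ⟨hx, hskew⟩, hv⟩
      · exact ⟨Or.inr ⟨rfl, hby, hskew.2⟩, hv⟩
  have hprefix : (cells.map fun x => T x.1 x.2) <+: rowWord lam eta T N := by
    rw [rowWord_eq_map_readingCells]
    exact (readingCells_append_rowCells_prefix ha hab.1).map _
  have := (hT.2.2 N hN).count_le_of_prefix hprefix (c - 1)
  rwa [show c - 1 + 2 = c + 1 by omega, show c - 1 + 1 = c by omega, hcount, hcount] at this

theorem IsLRTableau.fst_lt_of_occRank_eq (hT : IsLRTableau lam eta mu T) (hlam : Antitone lam)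
    (heta : IsPartition eta) {c : ℕ} (hc : 1 ≤ c) {p q : ℕ × ℕ}
    (hp : InSkew lam eta p) (hTp : T p.1 p.2 = c) (hq : InSkew lam eta q)
    (hTq : T q.1 q.2 = c + 1) (hrank : occRank lam eta T c p = occRank lam eta T (c + 1) q) :
    p.1 < q.1 := by
  have hS := hT.1
  have hfin := heta.finite_setOf_inSkew lam
  by_contra! hqp
  have hsucc :
      occRank lam eta T (c + 1) q + 1 ≤ (cellsReadBefore lam eta T q.1 q.2 (c + 1)).ncard := by
    rw [occRank, Nat.card_coe_set_eq, ← Set.ncard_insert_of_notMem (a := q)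
      (fun h => lt_irrefl _ h.2.2) (hfin.subset fun x hx => hx.1)]
    refine Set.ncard_le_ncard ?_ (hfin.subset fun x hx => hx.1)
    rintro x (rfl | ⟨hx, hTx, hlt⟩)
    · exact ⟨hq, Or.inr ⟨rfl, le_rfl⟩, hTq⟩
    · have := hS.fst_le_of_snd_lt hlam heta.1 hq hx (hTq.trans hTx.symm) hlt
      exact ⟨hx, this.lt_or_eq.imp id fun h => ⟨h, hlt.le⟩, hTx⟩
  have hle : (cellsReadBefore lam eta T q.1 q.2 c).ncard ≤ occRank lam eta T c p := by
    rw [occRank, Nat.card_coe_set_eq]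
    refine Set.ncard_le_ncard ?_ (hfin.subset fun x hx => hx.1)
    rintro x ⟨hx, hread, hTx⟩
    have hxq : x.1 < q.1 := by
      refine hread.resolve_right fun ⟨h1, h2⟩ => ?_
      have := hS.le_of_col_le hq.1 h2 (h1 ▸ hx.2)
      rw [h1] at hTx
      omega
    refine ⟨hx, hTx, ?_⟩
    rcases lt_trichotomy p.2 x.2 with h | h | h
    · exact h
    · have := hS.eq_of_snd_eq hlam heta.1 hp hx (hTp.trans hTx.symm) h
      subst this
      omega
    · have := hS.fst_le_of_snd_lt hlam heta.1 hx hp (hTx.trans hTp.symm) h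
      omega
  have := hT.ncard_cellsReadBefore_succ_le heta hc hq
  omega

theorem IsLRTableau.setOf_le_occCount (hT : IsLRTableau lam eta mu T) (j : ℕ) :
    {c | 1 ≤ c ∧ j ≤ occCount lam eta T c} = (· + 1) '' {i | j ≤ mu i} := by
  ext c
  simp only [Set.mem_ofPred_eq, Set.mem_image]
  constructor
  · rintro ⟨hc, hj⟩
    refine ⟨c - 1, ?_, by omega⟩
    rw [← hT.2.1, Nat.sub_add_cancel hc]
    exact hj
  · rintro ⟨i, hi, rfl⟩
    exact ⟨by omega, hi.trans (hT.2.1 i).ge⟩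

end LRTableau

theorem stmt19_general (lam eta mu : ℕ → ℕ) (T : ℕ → ℕ → ℕ)
    (hlam : IsPartition lam) (heta : IsPartition eta) (hmu : IsPartition mu)
    (hT : IsLRTableau lam eta mu T) :
    (∀ c : ℕ, 1 ≤ c → ∀ p q : ℕ × ℕ,
        InSkew lam eta p → T p.1 p.2 = c →
        InSkew lam eta q → T q.1 q.2 = c + 1 →
        occRank lam eta T c p = occRank lam eta T (c + 1) q →
        p.1 < q.1) ∧
    (∀ j : ℕ, 1 ≤ j →
      Nat.card {c : ℕ | 1 ≤ c ∧ j ≤ occCount lam eta T c}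
        = Nat.card {i : ℕ | j ≤ mu i}) ∧
    (∀ j : ℕ, 1 ≤ j →
      Nat.card {c : ℕ | 1 ≤ c ∧ j + 1 ≤ occCount lam eta T c}
        ≤ Nat.card {c : ℕ | 1 ≤ c ∧ j ≤ occCount lam eta T c}) :=
  ⟨fun _ hc _ _ hp hTp hq hTq hrank => hT.fst_lt_of_occRank_eq hlam.1 heta hc hp hTp hq hTq hrank,
    fun j _ => by
      rw [hT.setOf_le_occCount, Nat.card_image_of_injective (add_left_injective 1)],
    fun j hj => by
      rw [hT.setOf_le_occCount, hT.setOf_le_occCount,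
        Nat.card_image_of_injective (add_left_injective 1),
        Nat.card_image_of_injective (add_left_injective 1)]
      exact hmu.card_setOf_succ_le_le hj⟩

/-- The grouping procedure (Definition 3.7, Step (i)): repeatedly extracting
the rightmost remaining occurrence of each letter `i = 1, …, h` groups the
entries of an LR tableau `T` of weight `mu`.  Then within each group the
letter `c+1` lies in a strictly lower row than the letter `c`, the group sizes
equal the column heights of `mu` (the conjugate partition of `mu`), and they
are weakly decreasing. -/
theorem stmt19 (lam eta mu : ℕ → ℕ) (T : ℕ → ℕ → ℕ)
    (hlam : IsPartition lam) (heta : IsPartition eta) (hmu : IsPartition mu)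
    (hsub : ∀ i, lam i ≤ eta i)
    (hT : IsLRTableau lam eta mu T) :
    (∀ c : ℕ, 1 ≤ c → ∀ p q : ℕ × ℕ,
        InSkew lam eta p → T p.1 p.2 = c →
        InSkew lam eta q → T q.1 q.2 = c + 1 →
        occRank lam eta T c p = occRank lam eta T (c + 1) q →
        p.1 < q.1) ∧
    (∀ j : ℕ, 1 ≤ j →
      Nat.card {c : ℕ | 1 ≤ c ∧ j ≤ occCount lam eta T c}
        = Nat.card {i : ℕ | j ≤ mu i}) ∧
    (∀ j : ℕ, 1 ≤ j →
      Nat.card {c : ℕ | 1 ≤ c ∧ j + 1 ≤ occCount lam eta T c}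
        ≤ Nat.card {c : ℕ | 1 ≤ c ∧ j ≤ occCount lam eta T c}) :=
  stmt19_general lam eta mu T hlam heta hmu hT
end
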